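/- arXiv:2205.00495 — 4 statements merged into one kernel-verified Lean document; each statement's English description precedes it below -/
import Mathlib

section
/- Let n > 0 and let Z be a random n×n real symmetric matrix with zero diagonal such that the above-diagonal entries (Z_{ij})_{i<j} are independent real random variables each with mean 0, variance 1, and all moments finite, and Z_{ji} = Z_{ij}. Then E[det(x·I_n − Z)] = Σ_{i=0}^{⌊n/2⌋} ((−1/2)^i / i!) · (n!/(n−2i)!) · x^{n−2i}, the degree-n probabilists' Hermite polynomial He_n(x) (equivalently, the matching polynomial of the complete graph on n vertices). -/
open MeasureTheory ProbabilityTheory Polynomial Matrix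

open Equiv Finset
open scoped Nat

noncomputable section

def invSum (α : Type*) [Fintype α] [DecidableEq α] : ℝ[X] :=
  ∑ σ ∈ Finset.univ.filter (fun σ : Equiv.Perm α => ∀ x, σ (σ x) = x),
    C ((Equiv.Perm.sign σ : ℤ) : ℝ) * (X : ℝ[X]) ^ (Finset.univ.filter fun i => σ i = i).card

lemma invSum_of_subsingleton (α : Type*) [Fintype α] [DecidableEq α] [Subsingleton α] :
    invSum α = (X : ℝ[X]) ^ (Fintype.card α) := by
  have huniq : ∀ σ : Equiv.Perm α, σ = 1 := fun σ => Equiv.ext fun x => Subsingleton.elim _ _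
  rw [invSum, Finset.sum_eq_single_of_mem (1 : Equiv.Perm α)]
  · simp [Finset.filter_true_of_mem, Finset.card_univ]
  · simp
  · intro σ _ hσ; exact absurd (huniq σ) hσ

lemma fixIff {α : Type*} (σ : Equiv.Perm α) {a : α} (h2 : σ a = a) :
    ∀ x, σ x ≠ a ↔ x ≠ a := by
  intro x
  rw [not_iff_not]
  constructor
  · intro h; exact σ.injective (h.trans h2.symm)
  · rintro rfl; exact h2

lemma fixNe {α : Type*} (σ : Equiv.Perm α) {a : α} (h2 : σ a = a) :
    ∀ x, σ x ≠ x → x ≠ a := by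
  rintro x hx rfl; exact hx h2

-- the fixed-point case
lemma sum_fix (α : Type*) [Fintype α] [DecidableEq α] (a : α) :
    ∑ σ ∈ Finset.univ.filter (fun σ : Equiv.Perm α => (∀ x, σ (σ x) = x) ∧ σ a = a),
        C ((Equiv.Perm.sign σ : ℤ) : ℝ) * (X : ℝ[X]) ^ (Finset.univ.filter fun i => σ i = i).card
    = X * invSum {x : α // x ≠ a} := by
  rw [invSum, Finset.mul_sum]
  refine Finset.sum_bij'
    (fun σ hσ => σ.subtypePerm (fixIff σ ((Finset.mem_filter.mp hσ).2.2)))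
    (fun τ _ => Equiv.Perm.ofSubtype τ) ?_ ?_ ?_ ?_ ?_
  · intro σ hσ
    obtain ⟨-, h1, -⟩ := Finset.mem_filter.mp hσ
    simp only [Finset.mem_filter, Finset.mem_univ, true_and]
    intro x; exact Subtype.ext (h1 x)
  · intro τ hτ
    simp only [Finset.mem_filter, Finset.mem_univ, true_and] at hτ ⊢
    have h0 : Equiv.Perm.ofSubtype τ a = a :=
      Equiv.Perm.ofSubtype_apply_of_not_mem τ (by simp)
    refine ⟨fun x => ?_, h0⟩
    by_cases hx : x ≠ a
    · rw [Equiv.Perm.ofSubtype_apply_of_mem τ hx, Equiv.Perm.ofSubtype_apply_of_mem τ (τ ⟨x, hx⟩).2]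
      exact congrArg Subtype.val (hτ ⟨x, hx⟩)
    · push_neg at hx
      subst hx
      rw [h0, h0]
  · intro σ hσ
    exact Equiv.Perm.ofSubtype_subtypePerm _ (fixNe σ ((Finset.mem_filter.mp hσ).2.2))
  · intro τ hτ
    refine Equiv.ext fun y => Subtype.ext ?_
    rw [Equiv.Perm.subtypePerm_apply]
    exact Equiv.Perm.ofSubtype_apply_of_mem τ y.2
  · intro σ hσ
    obtain ⟨-, hinv, h2⟩ := Finset.mem_filter.mp hσ
    rw [Equiv.Perm.sign_subtypePerm σ _ (fixNe σ h2)]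
    have hcard : (Finset.univ.filter fun i => σ i = i)
        = insert a ((Finset.univ.filter fun (y : {x : α // x ≠ a}) =>
            σ.subtypePerm (fixIff σ h2) y = y).image Subtype.val) := by
      ext x
      simp only [Finset.mem_filter, Finset.mem_univ, true_and, Finset.mem_insert,
        Finset.mem_image]
      constructor
      · intro hx
        by_cases hxa : x = a
        · exact Or.inl hxa
        · exact Or.inr ⟨⟨x, hxa⟩, Subtype.ext hx, rfl⟩
      · rintro (rfl | ⟨y, hy, rfl⟩)
        · exact h2
        · exact congrArg Subtype.val hy
    rw [hcard, Finset.card_insert_of_notMem (by simp),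
      Finset.card_image_of_injective _ Subtype.val_injective, pow_succ]
    ring

section Swap
variable {α : Type*} [DecidableEq α] {a b : α}

lemma swapIff (σ : Equiv.Perm α) (hinv : ∀ x, σ (σ x) = x) (h2 : σ a = b) (h3 : σ b = a) :
    ∀ x, (σ x ≠ a ∧ σ x ≠ b) ↔ (x ≠ a ∧ x ≠ b) := by
  intro x
  have e1 : σ x = a ↔ x = b := by
    constructor
    · intro h; have := congrArg σ h; rwa [hinv, h2] at this
    · intro h; rw [h, h3]
  have e2 : σ x = b ↔ x = a := by
    constructor
    · intro h; have := congrArg σ h; rwa [hinv, h3] at this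
    · intro h; rw [h, h2]
  constructor
  · rintro ⟨u, v⟩; exact ⟨fun h => v (by rw [h, h2]), fun h => u (by rw [h, h3])⟩
  · rintro ⟨u, v⟩; exact ⟨fun h => v (e1.mp h), fun h => u (e2.mp h)⟩

lemma swap_decomp (σ : Equiv.Perm α) (hab : a ≠ b) (hinv : ∀ x, σ (σ x) = x) (h2 : σ a = b)
    (h3 : σ b = a) :
    Equiv.swap a b * Equiv.Perm.ofSubtype (σ.subtypePerm (p := fun x => x ≠ a ∧ x ≠ b) (swapIff σ hinv h2 h3)) = σ := by
  refine Equiv.ext fun x => ?_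
  rcases eq_or_ne x a with rfl | hxa
  · rw [Equiv.Perm.mul_apply,
      Equiv.Perm.ofSubtype_apply_of_not_mem _ (by simp), Equiv.swap_apply_left, h2]
  rcases eq_or_ne x b with rfl | hxb
  · rw [Equiv.Perm.mul_apply,
      Equiv.Perm.ofSubtype_apply_of_not_mem _ (by simp [hab.symm]), Equiv.swap_apply_right, h3]
  · have hpx : x ≠ a ∧ x ≠ b := ⟨hxa, hxb⟩
    rw [Equiv.Perm.mul_apply,
      Equiv.Perm.ofSubtype_apply_of_mem (σ.subtypePerm (p := fun x => x ≠ a ∧ x ≠ b) (swapIff σ hinv h2 h3)) hpx]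
    have hσx := ((swapIff σ hinv h2 h3 x).mpr hpx)
    exact Equiv.swap_apply_of_ne_of_ne hσx.1 hσx.2

lemma sum_swap (α : Type*) [Fintype α] [DecidableEq α] (a b : α) (hab : a ≠ b) :
    ∑ σ ∈ Finset.univ.filter (fun σ : Equiv.Perm α => (∀ x, σ (σ x) = x) ∧ σ a = b),
        C ((Equiv.Perm.sign σ : ℤ) : ℝ) * (X : ℝ[X]) ^ (Finset.univ.filter fun i => σ i = i).card
    = - invSum {x : α // x ≠ a ∧ x ≠ b} := by
  rw [invSum, ← Finset.sum_neg_distrib]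
  refine Finset.sum_bij'
    (fun σ hσ => σ.subtypePerm (swapIff σ (Finset.mem_filter.mp hσ).2.1
      (Finset.mem_filter.mp hσ).2.2
      (by rw [← (Finset.mem_filter.mp hσ).2.2]; exact (Finset.mem_filter.mp hσ).2.1 a)))
    (fun τ _ => Equiv.swap a b * Equiv.Perm.ofSubtype τ) ?_ ?_ ?_ ?_ ?_
  · intro σ hσ
    obtain ⟨-, hinv, -⟩ := Finset.mem_filter.mp hσ
    simp only [Finset.mem_filter, Finset.mem_univ, true_and]
    intro x; exact Subtype.ext (hinv x)
  · intro τ hτ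
    simp only [Finset.mem_filter, Finset.mem_univ, true_and] at hτ ⊢
    have ha : (Equiv.swap a b * Equiv.Perm.ofSubtype τ) a = b := by
      rw [Equiv.Perm.mul_apply, Equiv.Perm.ofSubtype_apply_of_not_mem _ (by simp),
        Equiv.swap_apply_left]
    have hb : (Equiv.swap a b * Equiv.Perm.ofSubtype τ) b = a := by
      rw [Equiv.Perm.mul_apply, Equiv.Perm.ofSubtype_apply_of_not_mem _ (by simp [hab.symm]),
        Equiv.swap_apply_right]
    have hother : ∀ (x : α) (hxa : x ≠ a) (hxb : x ≠ b),
        (Equiv.swap a b * Equiv.Perm.ofSubtype τ) x = (τ ⟨x, ⟨hxa, hxb⟩⟩ : α) := by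
      intro x hxa hxb
      rw [Equiv.Perm.mul_apply, Equiv.Perm.ofSubtype_apply_of_mem _ ⟨hxa, hxb⟩]
      exact Equiv.swap_apply_of_ne_of_ne (τ ⟨x, _⟩).2.1 (τ ⟨x, _⟩).2.2
    refine ⟨fun x => ?_, ha⟩
    rcases eq_or_ne x a with rfl | hxa
    · rw [ha, hb]
    rcases eq_or_ne x b with rfl | hxb
    · rw [hb, ha]
    · rw [hother x hxa hxb, hother _ (τ ⟨x, ⟨hxa, hxb⟩⟩).2.1 (τ ⟨x, ⟨hxa, hxb⟩⟩).2.2]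
      exact congrArg Subtype.val (hτ ⟨x, ⟨hxa, hxb⟩⟩)
  · intro σ hσ
    obtain ⟨-, hinv, h2⟩ := Finset.mem_filter.mp hσ
    exact swap_decomp σ hab hinv h2 (by rw [← h2]; exact hinv a)
  · intro τ hτ
    refine Equiv.ext fun y => Subtype.ext ?_
    show (Equiv.swap a b * Equiv.Perm.ofSubtype τ) (y : α) = (τ y : α)
    rw [Equiv.Perm.mul_apply, Equiv.Perm.ofSubtype_apply_of_mem τ y.2]
    exact Equiv.swap_apply_of_ne_of_ne (τ y).2.1 (τ y).2.2
  · intro σ hσ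
    obtain ⟨-, hinv, h2⟩ := Finset.mem_filter.mp hσ
    have h3 : σ b = a := by rw [← h2]; exact hinv a
    have hsign : Equiv.Perm.sign σ
        = - Equiv.Perm.sign (σ.subtypePerm (p := fun x => x ≠ a ∧ x ≠ b) (swapIff σ hinv h2 h3)) := by
      conv_lhs => rw [← swap_decomp σ hab hinv h2 h3]
      rw [Equiv.Perm.sign_mul, Equiv.Perm.sign_swap hab, Equiv.Perm.sign_ofSubtype]
      simp
    have hcard : (Finset.univ.filter fun i => σ i = i)
        = (Finset.univ.filter fun (y : {x : α // x ≠ a ∧ x ≠ b}) =>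
            σ.subtypePerm (p := fun x => x ≠ a ∧ x ≠ b) (swapIff σ hinv h2 h3) y = y).image Subtype.val := by
      ext x
      simp only [Finset.mem_filter, Finset.mem_univ, true_and, Finset.mem_image]
      constructor
      · intro hx
        have hxa : x ≠ a := by rintro rfl; rw [h2] at hx; exact hab hx.symm
        have hxb : x ≠ b := by rintro rfl; rw [h3] at hx; exact hab hx
        exact ⟨⟨x, ⟨hxa, hxb⟩⟩, Subtype.ext hx, rfl⟩
      · rintro ⟨y, hy, rfl⟩
        exact congrArg Subtype.val hy
    rw [hsign, hcard, Finset.card_image_of_injective _ Subtype.val_injective]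
    push_cast
    rw [map_neg]
    ring

end Swap

lemma derivative_hermite' (n : ℕ) :
    derivative (hermite (n + 1)) = C ((n : ℤ) + 1) * hermite n := by
  ext k
  rw [coeff_derivative, coeff_C_mul, coeff_hermite, coeff_hermite]
  have hpar : Even (n + 1 + (k + 1)) ↔ Even (n + k) := by
    simp only [Nat.even_iff]; omega
  by_cases h : Even (n + k)
  · rw [if_pos (hpar.mpr h), if_pos h]
    have hs : n + 1 - (k + 1) = n - k := by omega
    rw [hs]
    by_cases hkn : k ≤ n
    · have hnat : (n + 1).choose (k + 1) * (k + 1) = (n + 1) * n.choose k :=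
        (Nat.add_one_mul_choose_eq n k).symm
      have hcast : ((n + 1).choose (k + 1) : ℤ) * ((k : ℤ) + 1) = ((n : ℤ) + 1) * (n.choose k : ℤ) := by
        exact_mod_cast congrArg (Nat.cast : ℕ → ℤ) hnat
      push_cast
      linear_combination ((-1 : ℤ) ^ ((n - k) / 2) * ((n - k - 1)‼ : ℤ)) * hcast
    · rw [Nat.choose_eq_zero_of_lt (show n < k by omega),
        Nat.choose_eq_zero_of_lt (show n + 1 < k + 1 by omega)]
      push_cast
      ring
  · rw [if_neg (fun hc => h (hpar.mp hc)), if_neg h]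
    push_cast
    ring

universe u

theorem invSum_eq : ∀ (N : ℕ) (α : Type u) [Fintype α] [DecidableEq α],
    Fintype.card α = N → invSum α = (hermite N).map (Int.castRingHom ℝ) := by
  intro N
  induction N using Nat.strong_induction_on with
  | _ N IH =>
    intro α _ _ hcard
    rcases N with _ | _ | n
    · haveI : IsEmpty α := Fintype.card_eq_zero_iff.mp hcard
      haveI : Subsingleton α := ⟨fun a => isEmptyElim a⟩
      rw [invSum_of_subsingleton, hcard]
      simp
    · haveI : Subsingleton α := Fintype.card_le_one_iff_subsingleton.mp (by omega)
      rw [invSum_of_subsingleton, hcard, hermite_one]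
      simp
    · obtain ⟨a⟩ : Nonempty α := Fintype.card_pos_iff.mp (by omega)
      have hsub1 : Fintype.card {x : α // x ≠ a} = n + 1 := by
        have h := Fintype.card_subtype_compl (fun x : α => x = a)
        rw [Fintype.card_subtype_eq, hcard] at h
        exact h
      have hsub2 : ∀ b : α, b ≠ a → Fintype.card {x : α // x ≠ a ∧ x ≠ b} = n := by
        intro b hba
        rw [Fintype.card_subtype]
        have : (Finset.univ.filter fun x : α => x ≠ a ∧ x ≠ b) = Finset.univ \ {a, b} := by
          ext x; simp [not_or]
        rw [this, Finset.card_sdiff_of_subset (Finset.subset_univ _), Finset.card_univ, hcard,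
          Finset.card_insert_of_notMem (by simp [hba.symm]), Finset.card_singleton]
        omega
      -- split the defining sum
      rw [invSum,
        ← Finset.sum_filter_add_sum_filter_not
          (Finset.univ.filter (fun σ : Equiv.Perm α => ∀ x, σ (σ x) = x)) (fun σ => σ a = a)]
      have e1 : (Finset.univ.filter (fun σ : Equiv.Perm α => ∀ x, σ (σ x) = x)).filter
          (fun σ => σ a = a)
          = Finset.univ.filter (fun σ : Equiv.Perm α => (∀ x, σ (σ x) = x) ∧ σ a = a) := by
        rw [Finset.filter_filter]
      have hfib : ∑ σ ∈ (Finset.univ.filter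
            (fun σ : Equiv.Perm α => ∀ x, σ (σ x) = x)).filter (fun σ => ¬ σ a = a),
            C ((Equiv.Perm.sign σ : ℤ) : ℝ) * (X : ℝ[X])
              ^ (Finset.univ.filter fun i => σ i = i).card
          = ∑ b ∈ Finset.univ.erase a, ∑ σ ∈ Finset.univ.filter
              (fun σ : Equiv.Perm α => (∀ x, σ (σ x) = x) ∧ σ a = b),
              C ((Equiv.Perm.sign σ : ℤ) : ℝ) * (X : ℝ[X])
                ^ (Finset.univ.filter fun i => σ i = i).card := by
        rw [← Finset.sum_fiberwise_of_maps_to (g := fun σ : Equiv.Perm α => σ a)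
          (fun σ hσ => Finset.mem_erase.mpr
            ⟨(Finset.mem_filter.mp hσ).2, Finset.mem_univ _⟩)]
        refine Finset.sum_congr rfl (fun b hb => ?_)
        congr 1
        rw [Finset.filter_filter, Finset.filter_filter]
        refine Finset.filter_congr (fun σ _ => ?_)
        have hba : b ≠ a := (Finset.mem_erase.mp hb).1
        constructor
        · rintro ⟨h1, -, h3⟩; exact ⟨h1, h3⟩
        · rintro ⟨h1, h3⟩; exact ⟨h1, fun hc => hba (h3.symm.trans hc), h3⟩
      rw [e1, hfib, sum_fix α a]
      have IH1 := IH (n + 1) (by omega) {x : α // x ≠ a} hsub1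
      rw [IH1]
      have hswap : ∀ b ∈ Finset.univ.erase a,
          ∑ σ ∈ Finset.univ.filter
            (fun σ : Equiv.Perm α => (∀ x, σ (σ x) = x) ∧ σ a = b),
            C ((Equiv.Perm.sign σ : ℤ) : ℝ) * (X : ℝ[X])
              ^ (Finset.univ.filter fun i => σ i = i).card
          = - (hermite n).map (Int.castRingHom ℝ) := by
        intro b hb
        have hba : b ≠ a := (Finset.mem_erase.mp hb).1
        rw [sum_swap α a b hba.symm, IH n (by omega) _ (hsub2 b hba)]
      rw [Finset.sum_congr rfl hswap, Finset.sum_const,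
        Finset.card_erase_of_mem (Finset.mem_univ a), Finset.card_univ, hcard]
      have hH : hermite (n + 1 + 1) = X * hermite (n + 1) - C ((n : ℤ) + 1) * hermite n := by
        rw [hermite_succ, derivative_hermite']
      rw [hH]
      simp only [Polynomial.map_sub, Polynomial.map_mul, Polynomial.map_X, Polynomial.map_C,
        eq_intCast, Int.cast_add, Int.cast_natCast, Int.cast_one, _root_.map_add, _root_.map_one,
        Polynomial.map_add, Polynomial.map_one, Polynomial.map_natCast,
        Polynomial.C_eq_natCast, nsmul_eq_mul]
      push_cast
      ring

lemma two_mul_factorial (i : ℕ) : (2 * i)! = 2 ^ i * i ! * (2 * i - 1)‼ := by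
  cases i with
  | zero => rfl
  | succ i =>
    have h1 : 2 * (i + 1) = (2 * i + 1) + 1 := by ring
    rw [h1, Nat.factorial_eq_mul_doubleFactorial]
    have h2 : 2 * i + 1 + 1 = 2 * (i + 1) := by ring
    have h3 : 2 * (i + 1) - 1 = 2 * i + 1 := by omega
    rw [h2, Nat.doubleFactorial_two_mul, h3]

lemma hermite_map_eq (n : ℕ) :
    (hermite n).map (Int.castRingHom ℝ)
    = ∑ i ∈ Finset.range (n / 2 + 1),
        ((-(1/2 : ℝ)) ^ i / (i.factorial : ℝ) * ((n.factorial : ℝ) / ((n - 2 * i).factorial : ℝ))) •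
          (X : ℝ[X]) ^ (n - 2 * i) := by
  refine Polynomial.ext fun d => ?_
  rw [Polynomial.coeff_map, Polynomial.finset_sum_coeff]
  simp only [Polynomial.coeff_smul, Polynomial.coeff_X_pow, smul_eq_mul]
  by_cases hcase : d ≤ n ∧ Even (n + d)
  · obtain ⟨hdn, hpar⟩ := hcase
    have hpar' : Even (n - d) := by
      rcases hpar with ⟨m, hm⟩
      exact ⟨m - d, by omega⟩
    obtain ⟨i, hi⟩ := hpar'
    have h2i : n - d = 2 * i := by omega
    have hd : n - 2 * i = d := by omega
    have himem : i ∈ Finset.range (n / 2 + 1) := Finset.mem_range.mpr (by omega)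
    rw [Finset.sum_eq_single_of_mem i himem]
    · rw [if_pos hd.symm, coeff_hermite_of_even_add hpar, h2i]
      have hfac0 : (i ! : ℝ) ≠ 0 := Nat.cast_ne_zero.mpr (Nat.factorial_ne_zero i)
      have hfac1 : ((n - 2 * i)! : ℝ) ≠ 0 := Nat.cast_ne_zero.mpr (Nat.factorial_ne_zero _)
      have hfac2 : ((2 * i)! : ℝ) ≠ 0 := Nat.cast_ne_zero.mpr (Nat.factorial_ne_zero _)
      have hpow : (2 : ℝ) ^ i ≠ 0 := pow_ne_zero _ two_ne_zero
      have hdf : ((2 * i - 1)‼ : ℝ) = ((2 * i)! : ℝ) / (2 ^ i * i !) := by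
        rw [eq_div_iff (by positivity)]
        exact_mod_cast (show (2 * i - 1)‼ * (2 ^ i * i !) = (2 * i)! by
          rw [two_mul_factorial i]; ring)
      have hchoose : (n.choose d : ℝ) = (n ! : ℝ) / (d ! * (n - d)!) :=
        Nat.cast_choose ℝ hdn
      have hdiv : 2 * i / 2 = i := by omega
      rw [hdiv]
      simp only [eq_intCast]
      push_cast
      rw [hdf, hchoose, h2i, hd]
      have hfacd : ((d)! : ℝ) ≠ 0 := Nat.cast_ne_zero.mpr (Nat.factorial_ne_zero _)
      field_simp
      rw [← mul_pow]
      norm_num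
    · intro j hj hji
      rw [if_neg, mul_zero]
      intro hc
      have hjmem := Finset.mem_range.mp hj
      have : 2 * j ≤ n := by omega
      omega
  · push_neg at hcase
    have hz : coeff (hermite n) d = 0 := by
      by_cases hdn : d ≤ n
      · exact coeff_hermite_of_odd_add (Nat.odd_iff.mpr (by
          have := hcase hdn
          rw [Nat.even_iff] at this
          omega))
      · exact coeff_hermite_of_lt (by omega)
    rw [hz]
    rw [Finset.sum_eq_zero]
    · simp
    · intro j hj
      rw [if_neg, mul_zero]
      intro hc
      have hjmem := Finset.mem_range.mp hj
      have h2j : 2 * j ≤ n := by omega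
      have hdn : d ≤ n := by omega
      have := hcase hdn
      rw [Nat.even_iff] at this
      omega

open MeasureTheory ProbabilityTheory Matrix

lemma integral_indep_prod {Ω : Type*} [MeasurableSpace Ω] (μ : Measure Ω) [IsProbabilityMeasure μ]
    {ι : Type*} (f : ι → Ω → ℝ)
    (hindep : iIndepFun (m := fun _ : ι => inferInstance) f μ)
    (hmeas : ∀ i, Measurable (f i)) (hint : ∀ i, Integrable (f i) μ) (s : Finset ι) :
    Integrable (fun ω => ∏ i ∈ s, f i ω) μ ∧
      ∫ ω, ∏ i ∈ s, f i ω ∂μ = ∏ i ∈ s, ∫ ω, f i ω ∂μ := by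
  classical
  induction s using Finset.induction_on with
  | empty => simp
  | @insert q s hq ih =>
    have hfun : (fun ω => ∏ i ∈ insert q s, f i ω) = fun ω => f q ω * ∏ i ∈ s, f i ω := by
      funext ω; rw [Finset.prod_insert hq]
    have hind : IndepFun (∏ j ∈ s, f j) (f q) μ :=
      hindep.indepFun_finsetProd_of_notMem hmeas hq
    have hprodeq : (∏ j ∈ s, f j) = fun ω => ∏ j ∈ s, f j ω := by
      funext ω; simp
    rw [hprodeq] at hind
    have hind' : IndepFun (f q) (fun ω => ∏ j ∈ s, f j ω) μ := hind.symm
    constructor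
    · rw [hfun]
      exact hind'.integrable_mul (hint q) ih.1
    · rw [hfun, Finset.prod_insert hq, ← ih.2]
      exact hind'.integral_mul_eq_mul_integral (hint q).aestronglyMeasurable ih.1.aestronglyMeasurable

def qf {n : ℕ} (σ : Equiv.Perm (Fin n)) (i : Fin n) : Fin n × Fin n :=
  (min i (σ i), max i (σ i))

lemma qf_lt {n : ℕ} (σ : Equiv.Perm (Fin n)) {i : Fin n} (hi : σ i ≠ i) :
    (qf σ i).1 < (qf σ i).2 :=
  min_lt_max.mpr (fun h => hi h.symm)

lemma qf_eq_iff {n : ℕ} (σ : Equiv.Perm (Fin n)) {i j : Fin n} :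
    qf σ j = qf σ i ↔ (j = i ∧ σ j = σ i) ∨ (j = σ i ∧ σ j = i) := by
  constructor
  · intro h
    obtain ⟨h1, h2⟩ := Prod.ext_iff.mp h
    simp only [qf] at h1 h2
    rcases le_total j (σ j) with hj | hj <;> rcases le_total i (σ i) with hi | hi
    · rw [min_eq_left hj, min_eq_left hi] at h1; rw [max_eq_right hj, max_eq_right hi] at h2
      exact Or.inl ⟨h1, h2⟩
    · rw [min_eq_left hj, min_eq_right hi] at h1; rw [max_eq_right hj, max_eq_left hi] at h2
      exact Or.inr ⟨h1, h2⟩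
    · rw [min_eq_right hj, min_eq_left hi] at h1; rw [max_eq_left hj, max_eq_right hi] at h2
      exact Or.inr ⟨h2, h1⟩
    · rw [min_eq_right hj, min_eq_right hi] at h1; rw [max_eq_left hj, max_eq_left hi] at h2
      exact Or.inl ⟨h2, h1⟩
  · rintro (⟨rfl, h⟩ | ⟨rfl, h⟩)
    · simp [qf, h]
    · simp [qf, h, min_comm, max_comm]

lemma fiber_invo {n : ℕ} (σ : Equiv.Perm (Fin n)) (hinv : ∀ x, σ (σ x) = x) {i : Fin n}
    (hi : σ i ≠ i) :
    (Finset.univ.filter fun j => σ j ≠ j).filter (fun j => qf σ j = qf σ i) = {i, σ i} := by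
  ext j
  simp only [Finset.mem_filter, Finset.mem_univ, true_and, Finset.mem_insert,
    Finset.mem_singleton]
  constructor
  · rintro ⟨-, h⟩
    rcases (qf_eq_iff σ).mp h with ⟨h1, -⟩ | ⟨h1, -⟩
    exacts [Or.inl h1, Or.inr h1]
  · rintro (rfl | rfl)
    · exact ⟨hi, rfl⟩
    · refine ⟨fun hc => hi (hc.symm.trans (hinv i)), ?_⟩
      exact (qf_eq_iff σ).mpr (Or.inr ⟨rfl, hinv i⟩)

lemma fiber_single {n : ℕ} (σ : Equiv.Perm (Fin n)) {x : Fin n} (hx : σ (σ x) ≠ x) :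
    (Finset.univ.filter fun j => σ j ≠ j).filter (fun j => qf σ j = qf σ x) = {x} := by
  have hxm : σ x ≠ x := fun h => hx (by rw [h, h])
  ext j
  simp only [Finset.mem_filter, Finset.mem_univ, true_and, Finset.mem_singleton]
  constructor
  · rintro ⟨hj, h⟩
    rcases (qf_eq_iff σ).mp h with ⟨h1, -⟩ | ⟨rfl, h2⟩
    · exact h1
    · exact absurd h2 hx
  · rintro rfl; exact ⟨hxm, rfl⟩

lemma moved_even {n : ℕ} (σ : Equiv.Perm (Fin n)) (hinv : ∀ x, σ (σ x) = x) :
    Even (Finset.univ.filter fun i => σ i ≠ i).card := by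
  rw [Finset.card_eq_sum_card_fiberwise
    (f := qf σ) (t := (Finset.univ.filter fun i => σ i ≠ i).image (qf σ))
    (fun x hx => Finset.mem_image_of_mem _ hx)]
  have h2 : ∀ p ∈ (Finset.univ.filter fun i => σ i ≠ i).image (qf σ),
      ((Finset.univ.filter fun i => σ i ≠ i).filter fun j => qf σ j = p).card = 2 := by
    intro p hp
    obtain ⟨i, hi, rfl⟩ := Finset.mem_image.mp hp
    have him : σ i ≠ i := (Finset.mem_filter.mp hi).2
    rw [fiber_invo σ hinv him,
      Finset.card_insert_of_notMem (by simp [Ne.symm him]), Finset.card_singleton]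
  rw [Finset.sum_congr rfl h2, Finset.sum_const, smul_eq_mul]
  exact ⟨_, by ring⟩

lemma sigma_int {Ω : Type*} [MeasurableSpace Ω] (μ : Measure Ω) [IsProbabilityMeasure μ]
    (n : ℕ) (Z : Ω → Fin n → Fin n → ℝ)
    (hmeas : ∀ i j : Fin n, Measurable fun ω => Z ω i j)
    (hsym : ∀ ω (i j : Fin n), Z ω j i = Z ω i j)
    (hindep : iIndepFun (m := fun _ : {p : Fin n × Fin n // p.1 < p.2} => inferInstance)
      (fun p ω => Z ω p.1.1 p.1.2) μ)
    (hmean : ∀ i j : Fin n, i < j → ∫ ω, Z ω i j ∂μ = 0)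
    (hvar : ∀ i j : Fin n, i < j → variance (fun ω => Z ω i j) μ = 1)
    (hmom : ∀ (i j : Fin n) (m : ℕ), i < j → Integrable (fun ω => (Z ω i j) ^ m) μ)
    (σ : Equiv.Perm (Fin n)) :
    Integrable (fun ω => ∏ i ∈ Finset.univ.filter (fun i => σ i ≠ i), Z ω (σ i) i) μ ∧
    ∫ ω, (∏ i ∈ Finset.univ.filter (fun i => σ i ≠ i), Z ω (σ i) i) ∂μ
      = (if (∀ x, σ (σ x) = x) then (1 : ℝ) else 0) := by
  classical
  set s := Finset.univ.filter (fun i => σ i ≠ i) with hs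
  set c : Fin n × Fin n → ℕ := fun p => (s.filter fun j => qf σ j = p).card with hc
  set t := (s.image (qf σ)).subtype (fun p => p.1 < p.2) with ht
  have hBlt : ∀ p ∈ s.image (qf σ), p.1 < p.2 := by
    intro p hp
    obtain ⟨i, hi, rfl⟩ := Finset.mem_image.mp hp
    exact qf_lt σ (Finset.mem_filter.mp hi).2
  have hrw : ∀ ω, ∏ i ∈ s, Z ω (σ i) i
      = ∏ p ∈ t, (Z ω p.val.1 p.val.2) ^ (c p.val) := by
    intro ω
    have h1 : ∏ i ∈ s, Z ω (σ i) i = ∏ i ∈ s, Z ω (qf σ i).1 (qf σ i).2 := by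
      refine Finset.prod_congr rfl fun i hi => ?_
      rcases le_total i (σ i) with h | h
      · simp only [qf, min_eq_left h, max_eq_right h]
        exact hsym ω i (σ i)
      · simp only [qf, min_eq_right h, max_eq_left h]
    rw [h1, Finset.prod_comp (fun p : Fin n × Fin n => Z ω p.1 p.2) (qf σ)]
    rw [← Finset.prod_subtype_of_mem (fun p : Fin n × Fin n => Z ω p.1 p.2 ^ c p) hBlt]
  have hkey := integral_indep_prod μ
    (fun (p : {p : Fin n × Fin n // p.1 < p.2}) ω => (Z ω p.val.1 p.val.2) ^ (c p.val))
    (hindep.comp (fun p x => x ^ c p.val) (fun p => measurable_id.pow_const _))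
    (fun p => (hmeas _ _).pow_const _)
    (fun p => hmom _ _ _ p.2) t
  have hfeq : (fun ω => ∏ i ∈ s, Z ω (σ i) i)
      = fun ω => ∏ p ∈ t, (Z ω p.val.1 p.val.2) ^ (c p.val) := funext hrw
  constructor
  · rw [hfeq]; exact hkey.1
  · rw [hfeq, hkey.2]
    by_cases hinv : ∀ x, σ (σ x) = x
    · rw [if_pos hinv]
      refine Finset.prod_eq_one fun p hp => ?_
      have hpB : p.val ∈ s.image (qf σ) := Finset.mem_subtype.mp hp
      obtain ⟨i, hi, hqi⟩ := Finset.mem_image.mp hpB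
      have hmi : σ i ≠ i := (Finset.mem_filter.mp hi).2
      have hc2 : c p.val = 2 := by
        rw [hc]
        simp only
        rw [← hqi, fiber_invo σ hinv hmi,
          Finset.card_insert_of_notMem (by simp [Ne.symm hmi]), Finset.card_singleton]
      rw [hc2]
      have hab : p.val.1 < p.val.2 := p.2
      have hm2 : MemLp (fun ω => Z ω p.val.1 p.val.2) 2 μ :=
        (memLp_two_iff_integrable_sq (hmeas _ _).aestronglyMeasurable).mpr
          (hmom _ _ 2 hab)
      have hvd := variance_eq_sub hm2
      rw [hvar _ _ hab, hmean _ _ hab] at hvd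
      have h2 : μ[(fun ω => Z ω p.val.1 p.val.2) ^ 2] = 1 := by
        have : (0 : ℝ) ^ 2 = 0 := by norm_num
        rw [this] at hvd
        linarith
      calc ∫ ω, (Z ω p.val.1 p.val.2) ^ 2 ∂μ
          = μ[(fun ω => Z ω p.val.1 p.val.2) ^ 2] := by
            refine integral_congr_ae (Filter.Eventually.of_forall fun ω => ?_)
            simp [Pi.pow_apply]
        _ = 1 := h2
    · rw [if_neg hinv]
      push_neg at hinv
      obtain ⟨x, hx⟩ := hinv
      have hxm : σ x ≠ x := fun h => hx (by rw [h, h])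
      have hxs : x ∈ s := Finset.mem_filter.mpr ⟨Finset.mem_univ x, hxm⟩
      have hpx : (⟨qf σ x, qf_lt σ hxm⟩ : {p : Fin n × Fin n // p.1 < p.2}) ∈ t :=
        Finset.mem_subtype.mpr (Finset.mem_image_of_mem _ hxs)
      refine Finset.prod_eq_zero hpx ?_
      have hc1 : c (qf σ x) = 1 := by
        rw [hc]
        simp only
        rw [fiber_single σ hx, Finset.card_singleton]
      rw [hc1]
      simp only [pow_one]
      exact hmean _ _ (qf_lt σ hxm)

set_option linter.unusedVariables false in

theorem stmt2 {Ω : Type*} [MeasurableSpace Ω] (μ : Measure Ω) [IsProbabilityMeasure μ]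
    (n : ℕ) (hn : 0 < n)
    (Z : Ω → Fin n → Fin n → ℝ)
    (hmeas : ∀ i j : Fin n, Measurable fun ω => Z ω i j)
    -- symmetric with zero diagonal:
    (hsym : ∀ ω (i j : Fin n), Z ω j i = Z ω i j)
    (hdiag : ∀ ω (i : Fin n), Z ω i i = 0)
    -- the above-diagonal entries are independent,
    (hindep : iIndepFun (m := fun _ : {p : Fin n × Fin n // p.1 < p.2} => inferInstance)
      (fun p ω => Z ω p.1.1 p.1.2) μ)
    -- with mean 0,
    (hmean : ∀ i j : Fin n, i < j → ∫ ω, Z ω i j ∂μ = 0)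
    -- variance 1,
    (hvar : ∀ i j : Fin n, i < j → variance (fun ω => Z ω i j) μ = 1)
    -- and all moments finite:
    (hmom : ∀ (i j : Fin n) (m : ℕ), i < j → Integrable (fun ω => (Z ω i j) ^ m) μ) :
    ∀ d, ∫ ω, (((X : ℝ[X]) • (1 : Matrix (Fin n) (Fin n) ℝ[X])
        - (Matrix.of (Z ω)).map C).det).coeff d ∂μ
      = (∑ i ∈ Finset.range (n / 2 + 1),
          ((-(1/2 : ℝ)) ^ i / (i.factorial : ℝ) * ((n.factorial : ℝ) / ((n - 2 * i).factorial : ℝ))) •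
            (X : ℝ[X]) ^ (n - 2 * i)).coeff d := by
  classical
  intro d
  have hpoint : ∀ ω : Ω,
      (((X : ℝ[X]) • (1 : Matrix (Fin n) (Fin n) ℝ[X]) - (Matrix.of (Z ω)).map C).det).coeff d
      = ∑ σ : Equiv.Perm (Fin n),
          (((Equiv.Perm.sign σ : ℤ) : ℝ)
              * (-1 : ℝ) ^ (Finset.univ.filter fun i => σ i ≠ i).card
              * (if d = (Finset.univ.filter fun i => σ i = i).card then (1:ℝ) else 0))
            * ∏ i ∈ Finset.univ.filter (fun i => σ i ≠ i), Z ω (σ i) i := by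
    intro ω
    rw [Matrix.det_apply', Polynomial.finset_sum_coeff]
    refine Finset.sum_congr rfl fun σ _ => ?_
    have hfixprod : ∏ i ∈ Finset.univ.filter (fun i => σ i = i),
        ((X : ℝ[X]) • (1 : Matrix (Fin n) (Fin n) ℝ[X]) - (Matrix.of (Z ω)).map C) (σ i) i
        = (X : ℝ[X]) ^ (Finset.univ.filter fun i => σ i = i).card := by
      rw [Finset.prod_congr rfl (fun i hi => ?_), Finset.prod_const]
      have hfix : σ i = i := (Finset.mem_filter.mp hi).2
      simp [Matrix.sub_apply, Matrix.smul_apply, Matrix.one_apply, Matrix.map_apply,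
        Matrix.of_apply, hfix, hdiag ω i, smul_eq_mul]
    have hmovprod : ∏ i ∈ Finset.univ.filter (fun i => σ i ≠ i),
        ((X : ℝ[X]) • (1 : Matrix (Fin n) (Fin n) ℝ[X]) - (Matrix.of (Z ω)).map C) (σ i) i
        = (-1 : ℝ[X]) ^ (Finset.univ.filter fun i => σ i ≠ i).card
            * C (∏ i ∈ Finset.univ.filter (fun i => σ i ≠ i), Z ω (σ i) i) := by
      have hstep : ∀ i ∈ Finset.univ.filter (fun i => σ i ≠ i),
          ((X : ℝ[X]) • (1 : Matrix (Fin n) (Fin n) ℝ[X]) - (Matrix.of (Z ω)).map C) (σ i) i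
            = (-1 : ℝ[X]) * C (Z ω (σ i) i) := by
        intro i hi
        have hne : σ i ≠ i := (Finset.mem_filter.mp hi).2
        simp [Matrix.sub_apply, Matrix.smul_apply, Matrix.one_apply, Matrix.map_apply,
          Matrix.of_apply, hne, smul_eq_mul]
      rw [Finset.prod_congr rfl hstep, Finset.prod_mul_distrib, Finset.prod_const,
        ← _root_.map_prod]
    have hsplit : ∏ i : Fin n,
        ((X : ℝ[X]) • (1 : Matrix (Fin n) (Fin n) ℝ[X]) - (Matrix.of (Z ω)).map C) (σ i) i
        = (X : ℝ[X]) ^ (Finset.univ.filter fun i => σ i = i).card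
            * ((-1 : ℝ[X]) ^ (Finset.univ.filter fun i => σ i ≠ i).card
              * C (∏ i ∈ Finset.univ.filter (fun i => σ i ≠ i), Z ω (σ i) i)) := by
      rw [← Finset.prod_filter_mul_prod_filter_not Finset.univ (fun i => σ i = i), hfixprod,
        ← hmovprod]
    rw [hsplit]
    have hC : (((Equiv.Perm.sign σ : ℤ) : ℝ[X]))
        * ((X : ℝ[X]) ^ (Finset.univ.filter fun i => σ i = i).card
          * ((-1 : ℝ[X]) ^ (Finset.univ.filter fun i => σ i ≠ i).card
            * C (∏ i ∈ Finset.univ.filter (fun i => σ i ≠ i), Z ω (σ i) i)))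
        = C (((Equiv.Perm.sign σ : ℤ) : ℝ)
              * (-1 : ℝ) ^ (Finset.univ.filter fun i => σ i ≠ i).card
              * ∏ i ∈ Finset.univ.filter (fun i => σ i ≠ i), Z ω (σ i) i)
            * (X : ℝ[X]) ^ (Finset.univ.filter fun i => σ i = i).card := by
      rw [Polynomial.C_mul, Polynomial.C_mul, _root_.map_pow, _root_.map_neg, _root_.map_one,
        Polynomial.C_eq_intCast]
      ring
    rw [hC, Polynomial.coeff_C_mul, Polynomial.coeff_X_pow]
    ring
  rw [integral_congr_ae (Filter.Eventually.of_forall hpoint)]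
  rw [integral_finset_sum _ (fun σ _ =>
    ((sigma_int μ n Z hmeas hsym hindep hmean hvar hmom σ).1.const_mul _))]
  rw [Finset.sum_congr rfl (fun σ _ => by
    rw [integral_const_mul, (sigma_int μ n Z hmeas hsym hindep hmean hvar hmom σ).2])]
  have hfin : ∑ σ : Equiv.Perm (Fin n),
      (((Equiv.Perm.sign σ : ℤ) : ℝ)
          * (-1 : ℝ) ^ (Finset.univ.filter fun i => σ i ≠ i).card
          * (if d = (Finset.univ.filter fun i => σ i = i).card then (1:ℝ) else 0))
        * (if (∀ x, σ (σ x) = x) then (1:ℝ) else 0)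
      = (invSum (Fin n)).coeff d := by
    rw [invSum, Polynomial.finset_sum_coeff, Finset.sum_filter]
    refine Finset.sum_congr rfl fun σ _ => ?_
    by_cases hinv : ∀ x, σ (σ x) = x
    · rw [if_pos hinv, if_pos hinv, mul_one, Polynomial.coeff_C_mul, Polynomial.coeff_X_pow,
        (moved_even σ hinv).neg_one_pow, mul_one]
    · rw [if_neg hinv, if_neg hinv, mul_zero]
  rw [hfin, invSum_eq n (Fin n) (Fintype.card_fin n), hermite_map_eq]

end
end

section
/- Let p be a monic real polynomial of degree n with n distinct real roots λ_1, …, λ_n, and define q(x,θ) = Σ_{k=0}^{⌊n/2⌋} ((−θ)^k/k!) · p^{(2k)}(x). Fix an index i and suppose r is a real-valued function, differentiable at 0, with r(0) = λ_i and q(r(θ), θ) = 0 for all θ in a neighborhood of 0. Then r'(0) = Σ_{j≠i} 2/(λ_i − λ_j). -/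
/-!
Differentiating `q(r θ, θ) = 0` at `θ = 0` kills every term of `q` except `p(x) - θ p''(x)`, so
`p'(λᵢ) r'(0) = p''(λᵢ)`. Writing `p = (X - λᵢ) g` with `g = ∏_{j ≠ i} (X - λⱼ)` gives
`p'(λᵢ) = g(λᵢ) ≠ 0` and `p''(λᵢ) = 2 g'(λᵢ) = 2 g(λᵢ) ∑_{j ≠ i} 1 / (λᵢ - λⱼ)`.
-/

open Polynomial Finset

noncomputable section

namespace Polynomial

theorem eq_prod_X_sub_C_of_injective {K ι : Type*} [Field K] [Fintype ι] {p : K[X]}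
    (hmonic : p.Monic) (hdeg : p.natDegree ≤ Fintype.card ι) {lam : ι → K}
    (hinj : Function.Injective lam) (hroots : ∀ j, p.eval (lam j) = 0) :
    p = ∏ j, (X - C (lam j)) := by
  have hdvd : ∏ j, (X - C (lam j)) ∣ p :=
    prod_dvd_of_coprime ((pairwise_coprime_X_sub_C hinj).set_pairwise _)
      fun j _ => dvd_iff_isRoot.2 (hroots j)
  refine eq_of_monic_of_dvd_of_natDegree_le (monic_prod_of_monic _ _ fun j _ => monic_X_sub_C _)
    hmonic hdvd ?_
  rwa [natDegree_prod_of_monic _ _ fun j _ => monic_X_sub_C _, sum_const_nat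
    fun j _ => natDegree_X_sub_C _, mul_one]

section CommRing

variable {R : Type*} [CommRing R]

theorem eval_derivative_X_sub_C_mul (a : R) (g : R[X]) :
    (derivative ((X - C a) * g)).eval a = g.eval a := by
  simp

theorem eval_derivative_derivative_X_sub_C_mul (a : R) (g : R[X]) :
    (derivative (derivative ((X - C a) * g))).eval a = 2 * (derivative g).eval a := by
  simp only [derivative_mul, derivative_sub, derivative_X, derivative_C, sub_zero, one_mul,
    derivative_add, eval_add, eval_mul, eval_sub, eval_X, eval_C, sub_self, zero_mul, add_zero]
  ring

end CommRing

variable {K ι : Type*} [Field K]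

theorem eval_derivative_prod_X_sub_C (s : Finset ι) (μ : ι → K) {x : K}
    (hx : ∀ j ∈ s, x ≠ μ j) :
    (derivative (∏ j ∈ s, (X - C (μ j)))).eval x =
      (∏ j ∈ s, (x - μ j)) * ∑ j ∈ s, (x - μ j)⁻¹ := by
  classical
  rw [derivative_prod_finset, eval_finsetSum, mul_sum]
  refine sum_congr rfl fun j hj => ?_
  rw [← mul_prod_erase _ _ hj]
  simp only [derivative_X_sub_C, mul_one, eval_prod, eval_sub, eval_X, eval_C]
  field_simp [sub_ne_zero.2 (hx j hj)]

variable [Fintype ι] [DecidableEq ι] {lam : ι → K}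

theorem eval_derivative_prod_X_sub_C_ne_zero (hinj : Function.Injective lam) (i : ι) :
    (derivative (∏ j, (X - C (lam j)))).eval (lam i) ≠ 0 := by
  rw [← mul_prod_erase _ _ (mem_univ i), eval_derivative_X_sub_C_mul, eval_prod]
  simp only [eval_sub, eval_X, eval_C]
  exact prod_ne_zero_iff.2 fun j hj => sub_ne_zero.2 (hinj.ne (ne_of_mem_erase hj).symm)

theorem eval_derivative_derivative_prod_X_sub_C (hinj : Function.Injective lam) (i : ι) :
    (derivative (derivative (∏ j, (X - C (lam j))))).eval (lam i) =
      2 * (derivative (∏ j, (X - C (lam j)))).eval (lam i) *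
        ∑ j ∈ univ.erase i, (lam i - lam j)⁻¹ := by
  have hne : ∀ j ∈ univ.erase i, lam i ≠ lam j := fun j hj => hinj.ne (ne_of_mem_erase hj).symm
  rw [← mul_prod_erase _ _ (mem_univ i), eval_derivative_X_sub_C_mul,
    eval_derivative_derivative_X_sub_C_mul, eval_derivative_prod_X_sub_C _ _ hne, eval_prod]
  simp only [eval_sub, eval_X, eval_C, mul_assoc]

end Polynomial

/-- `q(x, θ) = (e^{-θ∂²} p)(x)`, truncated after `k = m`; exact once `deg p < 2 (m + 1)`. -/
def backwardHeatFlow (p : ℝ[X]) (m : ℕ) (θ x : ℝ) : ℝ :=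
  ∑ k ∈ range (m + 1), (-θ) ^ k / (k.factorial : ℝ) * (derivative^[2 * k] p).eval x

theorem hasDerivAt_neg_pow_div_factorial (k : ℕ) :
    HasDerivAt (fun θ : ℝ => (-θ) ^ k / (k.factorial : ℝ)) (if k = 1 then -1 else 0) 0 :=
  (((hasDerivAt_neg (0 : ℝ)).pow k).div_const _).congr_deriv <| by
    rcases k with _ | _ | k <;> simp

theorem hasDerivAt_backwardHeatFlow_comp (p : ℝ[X]) {m : ℕ} (hm : p.natDegree < 2 * (m + 1))
    {r : ℝ → ℝ} {r' : ℝ} (hr : HasDerivAt r r' 0) :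
    HasDerivAt (fun θ => backwardHeatFlow p m θ (r θ))
      ((derivative p).eval (r 0) * r' - (derivative (derivative p)).eval (r 0)) 0 := by
  have hterm : ∀ k ∈ range (m + 1), HasDerivAt
      (fun θ => (-θ) ^ k / (k.factorial : ℝ) * (derivative^[2 * k] p).eval (r θ))
      ((if k = 0 then (derivative (derivative^[2 * k] p)).eval (r 0) * r' else 0) +
        (if k = 1 then -(derivative^[2 * k] p).eval (r 0) else 0)) 0 :=
    fun k _ => ((hasDerivAt_neg_pow_div_factorial k).mul
      (((derivative^[2 * k] p).hasDerivAt (r 0)).comp 0 hr)).congr_deriv <| by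
        rcases k with _ | k <;> simp
  refine (HasDerivAt.fun_sum hterm).congr_deriv ?_
  rw [sum_add_distrib, sum_ite_eq', sum_ite_eq']
  rcases m with _ | m
  · have hp2 : derivative (derivative p) = 0 := iterate_derivative_eq_zero (x := 2) hm
    simp [hp2]
  · simp [sub_eq_add_neg]

theorem stmt4 (n : ℕ) (p : ℝ[X]) (hmonic : p.Monic) (hdeg : p.natDegree = n)
    (lam : Fin n → ℝ) (hinj : Function.Injective lam)
    (hroots : ∀ j, p.eval (lam j) = 0)
    (i : Fin n) (r : ℝ → ℝ) (hr : DifferentiableAt ℝ r 0) (hr0 : r 0 = lam i)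
    (hq : ∀ᶠ θ in nhds (0 : ℝ),
      ∑ k ∈ Finset.range (n / 2 + 1),
        (-θ) ^ k / (k.factorial : ℝ) * ((fun q => derivative q)^[2 * k] p).eval (r θ) = 0) :
    deriv r 0 = ∑ j ∈ Finset.univ.erase i, 2 / (lam i - lam j) := by
  have hp : p = ∏ j, (X - C (lam j)) :=
    eq_prod_X_sub_C_of_injective hmonic (by simp [hdeg]) hinj hroots
  have hflow : HasDerivAt (fun θ => backwardHeatFlow p (n / 2) θ (r θ))
      ((derivative p).eval (lam i) * deriv r 0 - (derivative (derivative p)).eval (lam i)) 0 :=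
    hr0 ▸ hasDerivAt_backwardHeatFlow_comp p (by omega) hr.hasDerivAt
  have hkey : (derivative p).eval (lam i) * deriv r 0 = (derivative (derivative p)).eval (lam i) :=
    sub_eq_zero.1 <| hflow.unique <| (hasDerivAt_const 0 0).congr_of_eventuallyEq hq
  rw [hp, eval_derivative_derivative_prod_X_sub_C hinj] at hkey
  have hr' : deriv r 0 = 2 * ∑ j ∈ univ.erase i, (lam i - lam j)⁻¹ :=
    mul_left_cancel₀ (eval_derivative_prod_X_sub_C_ne_zero hinj i) (hkey.trans (by ring))
  simp only [hr', mul_sum, div_eq_mul_inv]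
end
end

section
/- For all integers m, n > 0 with m ≤ n and all θ ≥ 0: if X is a random m×n real matrix whose entries are i.i.d. real random variables that are symmetrically distributed, have variance 1, and have all moments finite, then as polynomials in x and y, E[y^{n−m} det(xy·I_m − θ·XXᵀ)] = Σ_{i=0}^{m} ((−θ)^i/i!) ∂_x^i ∂_y^i [x^m y^n]. -/
open MeasureTheory ProbabilityTheory Matrix Finset

noncomputable section



lemma aux_prod_indep {Ω : Type*} [MeasurableSpace Ω] {ι : Type*} (μ : Measure Ω)
    [IsProbabilityMeasure μ]
    (Y : ι → Ω → ℝ) (hind : iIndepFun (m := fun _ => inferInstance) Y μ)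
    (hmeas : ∀ i, Measurable (Y i)) (hint : ∀ i, Integrable (Y i) μ) (s : Finset ι) :
    Integrable (fun ω => ∏ i ∈ s, Y i ω) μ ∧
      ∫ ω, ∏ i ∈ s, Y i ω ∂μ = ∏ i ∈ s, ∫ ω, Y i ω ∂μ := by
  classical
  induction s using Finset.induction with
  | empty => simp
  | @insert a s ha ih =>
    have hip : IndepFun (∏ j ∈ s, Y j) (Y a) μ :=
      hind.indepFun_finsetProd_of_notMem hmeas ha
    have hps : (∏ j ∈ s, Y j) = fun ω => ∏ j ∈ s, Y j ω := by
      funext ω; simp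
    have h1 : Integrable (fun ω => (∏ i ∈ s, Y i ω) * Y a ω) μ := by
      have := hip.integrable_mul (hps ▸ ih.1) (hint a)
      simpa [hps, Pi.mul_def] using this
    constructor
    · simpa [Finset.prod_insert ha, mul_comm] using h1
    · simp only [Finset.prod_insert ha]
      have := hip.integral_mul_eq_mul_integral (hps ▸ ih.1).aestronglyMeasurable
        (hint a).aestronglyMeasurable
      simp only [hps, Pi.mul_def] at this
      calc ∫ ω, Y a ω * ∏ i ∈ s, Y i ω ∂μ
          = ∫ ω, (∏ i ∈ s, Y i ω) * Y a ω ∂μ := by simp [mul_comm]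
        _ = (∫ ω, ∏ i ∈ s, Y i ω ∂μ) * ∫ ω, Y a ω ∂μ := this
        _ = (∫ ω, Y a ω ∂μ) * ∏ i ∈ s, ∫ ω, Y i ω ∂μ := by rw [ih.2, mul_comm]




abbrev Sf {m n : ℕ} (f : Fin m → Option (Fin n)) : Finset (Fin m) :=
  univ.filter fun i => (f i).isSome

lemma aux_det_expand (m n : ℕ) [NeZero n] (θ : ℝ) (A : Fin m → Fin n → ℝ) :
    (((MvPolynomial.X 0 * MvPolynomial.X 1 : MvPolynomial (Fin 2) ℝ)) •
        (1 : Matrix (Fin m) (Fin m) (MvPolynomial (Fin 2) ℝ))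
      - (θ • (Matrix.of A * (Matrix.of A)ᵀ)).map MvPolynomial.C).det
    = ∑ σ : Equiv.Perm (Fin m),
        ∑ f ∈ Fintype.piFinset (fun _ : Fin m => (univ : Finset (Option (Fin n)))),
          MvPolynomial.C (((Equiv.Perm.sign σ : ℤ) : ℝ) * (-θ) ^ (Sf f).card *
              ∏ i ∈ Sf f, (A (σ i) ((f i).iget) * A i ((f i).iget)))
          * (if ∀ i ∉ Sf f, σ i = i
              then (MvPolynomial.X 0 * MvPolynomial.X 1 : MvPolynomial (Fin 2) ℝ) ^ (m - (Sf f).card)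
              else 0) := by
  classical
  set M : Matrix (Fin m) (Fin m) (MvPolynomial (Fin 2) ℝ) :=
    ((MvPolynomial.X 0 * MvPolynomial.X 1 : MvPolynomial (Fin 2) ℝ)) •
        (1 : Matrix (Fin m) (Fin m) (MvPolynomial (Fin 2) ℝ))
      - (θ • (Matrix.of A * (Matrix.of A)ᵀ)).map MvPolynomial.C with hM
  rw [Matrix.det_apply']
  refine Finset.sum_congr rfl fun σ _ => ?_
  set g : Fin m → Option (Fin n) → MvPolynomial (Fin 2) ℝ := fun i t =>
    Option.rec (if σ i = i then (MvPolynomial.X 0 * MvPolynomial.X 1 : MvPolynomial (Fin 2) ℝ) else 0)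
      (fun j => MvPolynomial.C (-(θ * (A (σ i) j * A i j)))) t with hg
  have hentry : ∀ i : Fin m, M (σ i) i = ∑ t : Option (Fin n), g i t := by
    intro i
    rw [Fintype.sum_option]
    simp only [hM, hg, Matrix.sub_apply, Matrix.smul_apply, Matrix.map_apply, Matrix.one_apply,
      Matrix.mul_apply, Matrix.transpose_apply, Matrix.of_apply, smul_eq_mul, Finset.mul_sum,
      map_sum, mul_ite, mul_one, mul_zero]
    rw [sub_eq_add_neg, ← Finset.sum_neg_distrib]
    congr 1
    refine Finset.sum_congr rfl fun j _ => ?_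
    rw [map_neg, _root_.map_mul (MvPolynomial.C : ℝ →+* MvPolynomial (Fin 2) ℝ),
      _root_.map_mul (MvPolynomial.C : ℝ →+* MvPolynomial (Fin 2) ℝ)]
  calc (↑↑(Equiv.Perm.sign σ) : MvPolynomial (Fin 2) ℝ) * ∏ i : Fin m, M (σ i) i
      = ↑↑(Equiv.Perm.sign σ) *
          ∑ f ∈ Fintype.piFinset (fun _ : Fin m => (univ : Finset (Option (Fin n)))),
          ∏ i, g i (f i) := by
        rw [← Finset.prod_univ_sum]
        congr 1
        exact Finset.prod_congr rfl fun i _ => hentry i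
    _ = _ := by
        rw [Finset.mul_sum]
        refine Finset.sum_congr rfl fun f _ => ?_
        have hsplit : (∏ i, g i (f i)) =
            (∏ i ∈ univ.filter (fun i => ((f i).isSome : Prop)), g i (f i)) *
            ∏ i ∈ univ.filter (fun i => ¬((f i).isSome : Prop)), g i (f i) :=
          (Finset.prod_filter_mul_prod_filter_not univ _ _).symm
        have h1 : (∏ i ∈ Sf f, g i (f i)) =
            MvPolynomial.C ((-θ) ^ (Sf f).card *
              ∏ i ∈ Sf f, (A (σ i) ((f i).iget) * A i ((f i).iget))) := by
          have hvals : ∀ i ∈ Sf f, g i (f i) =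
              MvPolynomial.C ((-θ) * (A (σ i) ((f i).iget) * A i ((f i).iget))) := by
            intro i hi
            have hs : (f i).isSome := by simpa [Sf] using hi
            obtain ⟨j, hj⟩ := Option.isSome_iff_exists.mp hs
            rw [hj]
            simp only [hg, Option.iget_some]
            congr 1; ring
          rw [Finset.prod_congr rfl hvals, ← map_prod, Finset.prod_mul_distrib,
            Finset.prod_const]
        have h2 : (∏ i ∈ univ.filter (fun i => ¬((f i).isSome : Prop)), g i (f i)) =
            if ∀ i ∉ Sf f, σ i = i
              then (MvPolynomial.X 0 * MvPolynomial.X 1 : MvPolynomial (Fin 2) ℝ) ^ (m - (Sf f).card)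
              else 0 := by
          have hmem : ∀ i : Fin m, i ∈ univ.filter (fun i => ¬((f i).isSome : Prop)) ↔ i ∉ Sf f := by
            intro i; simp [Sf]
          have hval : ∀ i ∈ univ.filter (fun i => ¬((f i).isSome : Prop)), g i (f i) =
              if σ i = i then (MvPolynomial.X 0 * MvPolynomial.X 1 : MvPolynomial (Fin 2) ℝ) else 0 := by
            intro i hi
            have hs : ¬ (f i).isSome := by simpa using hi
            have : f i = none := Option.not_isSome_iff_eq_none.mp hs
            rw [this]
          rw [Finset.prod_congr rfl hval]
          by_cases hC : ∀ i ∉ Sf f, σ i = i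
          · rw [if_pos hC]
            have hconst : ∀ i ∈ univ.filter (fun i => ¬((f i).isSome : Prop)),
                (if σ i = i then (MvPolynomial.X 0 * MvPolynomial.X 1 : MvPolynomial (Fin 2) ℝ) else 0)
                = (MvPolynomial.X 0 * MvPolynomial.X 1 : MvPolynomial (Fin 2) ℝ) := by
              intro i hi
              rw [if_pos (hC i ((hmem i).mp hi))]
            rw [Finset.prod_congr rfl hconst, Finset.prod_const]
            congr 1
            have h3 := Finset.card_filter_add_card_filter_not
              (s := (univ : Finset (Fin m))) (p := fun i => ((f i).isSome : Prop))
            have hk := Finset.card_filter_le (univ : Finset (Fin m))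
              (fun i => ((f i).isSome : Prop))
            simp only [Sf, Finset.card_univ, Fintype.card_fin] at h3 hk ⊢
            omega
          · rw [if_neg hC]
            push_neg at hC
            obtain ⟨i0, hi0, hσ⟩ := hC
            exact Finset.prod_eq_zero ((hmem i0).mpr hi0) (by rw [if_neg hσ])
        rw [hsplit, h1, h2, ← mul_assoc]
        congr 1
        simp only [_root_.map_mul, map_intCast]
        ring




lemma aux_pd_pow (j : Fin 2) (e : ℕ) :
    MvPolynomial.pderiv j ((MvPolynomial.X j : MvPolynomial (Fin 2) ℝ) ^ e)
      = MvPolynomial.C (e : ℝ) * (MvPolynomial.X j) ^ (e - 1) := by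
  cases e with
  | zero => simp
  | succ e =>
    rw [MvPolynomial.pderiv_pow, MvPolynomial.pderiv_X_self, mul_one, map_natCast]

lemma aux_pd1 (a b k : ℕ) :
    (fun r => MvPolynomial.pderiv 1 r)^[k]
      ((MvPolynomial.X 0 : MvPolynomial (Fin 2) ℝ) ^ a * (MvPolynomial.X 1) ^ b)
    = MvPolynomial.C (b.descFactorial k : ℝ) *
        ((MvPolynomial.X 0 : MvPolynomial (Fin 2) ℝ) ^ a * (MvPolynomial.X 1) ^ (b - k)) := by
  induction k with
  | zero => simp
  | succ k ih =>
    rw [Function.iterate_succ_apply', ih]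
    have h3 : b - (k+1) = b - k - 1 := by omega
    rw [h3, Nat.descFactorial_succ]
    simp only [MvPolynomial.pderiv_mul, MvPolynomial.pderiv_C, aux_pd_pow, MvPolynomial.pderiv_pow, MvPolynomial.pderiv_X, Pi.single_apply,
      if_neg (by decide : ¬ (0:Fin 2) = 1), MvPolynomial.C_0, zero_mul, mul_zero, zero_add, mul_one]
    simp only [_root_.map_mul, map_natCast, if_true, Nat.cast_mul]
    ring

lemma aux_pd0 (a c k : ℕ) (r : ℝ) :
    (fun p => MvPolynomial.pderiv 0 p)^[k]
      (MvPolynomial.C r * ((MvPolynomial.X 0 : MvPolynomial (Fin 2) ℝ) ^ a * (MvPolynomial.X 1) ^ c))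
    = MvPolynomial.C ((a.descFactorial k : ℝ) * r) *
        ((MvPolynomial.X 0 : MvPolynomial (Fin 2) ℝ) ^ (a - k) * (MvPolynomial.X 1) ^ c) := by
  induction k with
  | zero => simp
  | succ k ih =>
    rw [Function.iterate_succ_apply', ih]
    have h3 : a - (k+1) = a - k - 1 := by omega
    rw [h3, Nat.descFactorial_succ]
    simp only [MvPolynomial.pderiv_mul, MvPolynomial.pderiv_C, aux_pd_pow, MvPolynomial.pderiv_pow, MvPolynomial.pderiv_X, Pi.single_apply,
      if_neg (by decide : ¬ (1:Fin 2) = 0), MvPolynomial.C_0, zero_mul, mul_zero, zero_add,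
      add_zero, mul_one]
    simp only [_root_.map_mul, map_natCast, if_true, Nat.cast_mul]
    ring




lemma aux_prod_fiber {ι α M : Type*} [Fintype α] [DecidableEq α] [CommMonoid M]
    (s : Finset ι) (v : ι → α) (x : α → M) :
    ∏ i ∈ s, x (v i) = ∏ p : α, x p ^ (s.filter (fun i => v i = p)).card := by
  rw [← Finset.prod_fiberwise_of_maps_to (g := v) (t := univ) (fun i _ => mem_univ _)
    (fun i => x (v i))]
  refine Finset.prod_congr rfl fun p _ => ?_
  rw [Finset.prod_congr rfl (fun i hi => by rw [(Finset.mem_filter.mp hi).2] :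
    ∀ i ∈ s.filter (fun i => v i = p), x (v i) = x p), Finset.prod_const]

lemma aux_mean_zero {Ω : Type*} [MeasurableSpace Ω] (μ : Measure Ω)
    (Y : Ω → ℝ) (hsym : IdentDistrib Y (fun ω => -Y ω) μ μ) : ∫ ω, Y ω ∂μ = 0 := by
  have h := hsym.integral_eq
  rw [integral_neg] at h
  linarith

lemma aux_sq_one {Ω : Type*} [MeasurableSpace Ω] (μ : Measure Ω) [IsProbabilityMeasure μ]
    (Y : Ω → ℝ) (hmeas : Measurable Y)
    (hsym : IdentDistrib Y (fun ω => -Y ω) μ μ)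
    (hvar : variance Y μ = 1) (hint2 : Integrable (fun ω => Y ω ^ 2) μ) :
    ∫ ω, Y ω ^ 2 ∂μ = 1 := by
  have hmem : MemLp Y 2 μ :=
    (memLp_two_iff_integrable_sq hmeas.aestronglyMeasurable).mpr hint2
  have h := variance_eq_sub hmem
  rw [hvar, aux_mean_zero μ Y hsym] at h
  simp only [Pi.pow_apply] at h
  linarith





lemma aux_count (m n : ℕ) [NeZero n] (w : Finset (Fin m) → ℝ) :
    ∑ f ∈ Fintype.piFinset (fun _ : Fin m => (univ : Finset (Option (Fin n)))),
      (if Set.InjOn (fun i => (f i).iget) ↑(Sf f) then w (Sf f) else 0)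
    = ∑ S : Finset (Fin m), (n.descFactorial S.card : ℝ) * w S := by
  classical
  rw [← Finset.sum_fiberwise_of_maps_to (g := fun f => Sf f)
    (t := (univ : Finset (Finset (Fin m)))) (fun f _ => mem_univ _)]
  refine Finset.sum_congr rfl fun S _ => ?_
  have hcongr : ∀ f ∈ (Fintype.piFinset (fun _ : Fin m => (univ : Finset (Option (Fin n))))).filter
      (fun f => Sf f = S),
      (if Set.InjOn (fun i => (f i).iget) ↑(Sf f) then w (Sf f) else 0)
      = (if Set.InjOn (fun i => (f i).iget) ↑S then w S else 0) := by
    intro f hf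
    rw [(Finset.mem_filter.mp hf).2]
  rw [Finset.sum_congr rfl hcongr, ← Finset.sum_filter, Finset.sum_const, Finset.filter_filter]
  have hcard : ((Fintype.piFinset (fun _ : Fin m => (univ : Finset (Option (Fin n))))).filter
      (fun f => Sf f = S ∧ Set.InjOn (fun i => (f i).iget) ↑S)).card
      = n.descFactorial S.card := by
    rw [show ((Fintype.piFinset (fun _ : Fin m => (univ : Finset (Option (Fin n))))).filter
        (fun f => Sf f = S ∧ Set.InjOn (fun i => (f i).iget) ↑S)).card
        = (univ : Finset ((↥(S : Finset (Fin m))) ↪ Fin n)).card from ?_]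
    · rw [Finset.card_univ, Fintype.card_embedding_eq, Fintype.card_coe, Fintype.card_fin]
    · refine Finset.card_bij'
        (i := fun f hf => ⟨fun x => (f x.1).iget, ?_⟩)
        (j := fun e _ => fun i => if h : i ∈ S then some (e ⟨i, h⟩) else none)
        ?_ ?_ ?_ ?_
      · -- injectivity of the embedding
        obtain ⟨hS, hinj⟩ : Sf f = S ∧ Set.InjOn (fun i => (f i).iget) ↑S := by
          simpa [Finset.mem_filter] using hf
        intro x y hxy
        exact Subtype.ext (hinj (by simpa using x.2) (by simpa using y.2) hxy)
      · intro f hf; exact Finset.mem_univ _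
      · intro e he
        simp only [Finset.mem_filter, Fintype.mem_piFinset, Finset.mem_univ, implies_true, true_and]
        constructor
        · ext i
          simp only [Sf, Finset.mem_filter, Finset.mem_univ, true_and]
          by_cases h : i ∈ S <;> simp [h]
        · intro i₁ h₁ i₂ h₂ heq
          have h₁' : i₁ ∈ S := by simpa using h₁
          have h₂' : i₂ ∈ S := by simpa using h₂
          simp only [dif_pos h₁', dif_pos h₂', Option.iget_some] at heq
          have := e.injective heq
          exact congrArg Subtype.val this
      · intro f hf
        obtain ⟨hS, hinj⟩ : Sf f = S ∧ Set.InjOn (fun i => (f i).iget) ↑S := by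
          simpa [Finset.mem_filter] using hf
        funext i
        by_cases h : i ∈ S
        · rw [dif_pos h]
          have hsome : (f i).isSome := by
            have : i ∈ Sf f := hS ▸ h
            simpa [Sf] using this
          obtain ⟨v, hv⟩ := Option.isSome_iff_exists.mp hsome
          simp [hv]
        · rw [dif_neg h]
          have : ¬ (f i).isSome := by
            intro hsome
            exact h (hS ▸ (by simpa [Sf] using hsome : i ∈ Sf f))
          exact (Option.not_isSome_iff_eq_none.mp this).symm
      · intro e he
        ext x
        simp [dif_pos x.2]
  rw [hcard, nsmul_eq_mul]


theorem stmt6 {Ω : Type*} [MeasurableSpace Ω] (μ : Measure Ω) [IsProbabilityMeasure μ]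
    (m n : ℕ) (hm : 0 < m) (hn : 0 < n) (hmn : m ≤ n) (θ : ℝ) (hθ : 0 ≤ θ)
    (Xm : Ω → Fin m → Fin n → ℝ)
    (hmeas : ∀ p : Fin m × Fin n, Measurable fun ω => Xm ω p.1 p.2)
    (hindep : iIndepFun (m := fun _ : Fin m × Fin n => inferInstance)
      (fun p ω => Xm ω p.1 p.2) μ)
    (hident : ∀ p q : Fin m × Fin n,
      IdentDistrib (fun ω => Xm ω p.1 p.2) (fun ω => Xm ω q.1 q.2) μ μ)
    (hsymm : ∀ p : Fin m × Fin n,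
      IdentDistrib (fun ω => Xm ω p.1 p.2) (fun ω => -Xm ω p.1 p.2) μ μ)
    (hvar : ∀ p : Fin m × Fin n, variance (fun ω => Xm ω p.1 p.2) μ = 1)
    (hmom : ∀ (p : Fin m × Fin n) (l : ℕ), Integrable (fun ω => (Xm ω p.1 p.2) ^ l) μ) :
    ∀ d : Fin 2 →₀ ℕ,
      ∫ ω, MvPolynomial.coeff d
          ((MvPolynomial.X 1 : MvPolynomial (Fin 2) ℝ) ^ (n - m) *
            (((MvPolynomial.X 0 * MvPolynomial.X 1 : MvPolynomial (Fin 2) ℝ)) •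
                (1 : Matrix (Fin m) (Fin m) (MvPolynomial (Fin 2) ℝ))
              - (θ • (Matrix.of (Xm ω) * (Matrix.of (Xm ω))ᵀ)).map MvPolynomial.C).det) ∂μ
        = MvPolynomial.coeff d
            (∑ i ∈ Finset.range (m + 1), ((-θ) ^ i / (i.factorial : ℝ)) •
              (fun r => MvPolynomial.pderiv 0 r)^[i]
                ((fun r => MvPolynomial.pderiv 1 r)^[i]
                  ((MvPolynomial.X 0 : MvPolynomial (Fin 2) ℝ) ^ m *
                    (MvPolynomial.X 1) ^ n))) := by
  classical
  haveI : NeZero n := ⟨hn.ne'⟩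
  intro d
  -- abbreviations
  set R : Equiv.Perm (Fin m) → (Fin m → Option (Fin n)) → Ω → ℝ :=
    fun σ f ω => ∏ i ∈ Sf f, (Xm ω (σ i) ((f i).iget) * Xm ω i ((f i).iget)) with hR
  set c : Equiv.Perm (Fin m) → (Fin m → Option (Fin n)) → ℝ :=
    fun σ f => ((Equiv.Perm.sign σ : ℤ) : ℝ) * (-θ) ^ (Sf f).card *
      MvPolynomial.coeff d ((MvPolynomial.X 1 : MvPolynomial (Fin 2) ℝ) ^ (n - m) *
        (if ∀ i ∉ Sf f, σ i = i
          then (MvPolynomial.X 0 * MvPolynomial.X 1 : MvPolynomial (Fin 2) ℝ) ^ (m - (Sf f).card)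
          else 0)) with hc
  -- pointwise expansion of the integrand
  have hpt : ∀ ω, MvPolynomial.coeff d
      ((MvPolynomial.X 1 : MvPolynomial (Fin 2) ℝ) ^ (n - m) *
        (((MvPolynomial.X 0 * MvPolynomial.X 1 : MvPolynomial (Fin 2) ℝ)) •
            (1 : Matrix (Fin m) (Fin m) (MvPolynomial (Fin 2) ℝ))
          - (θ • (Matrix.of (Xm ω) * (Matrix.of (Xm ω))ᵀ)).map MvPolynomial.C).det)
      = ∑ σ : Equiv.Perm (Fin m),
          ∑ f ∈ Fintype.piFinset (fun _ : Fin m => (univ : Finset (Option (Fin n)))),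
            c σ f * R σ f ω := by
    intro ω
    rw [aux_det_expand m n θ (Xm ω), Finset.mul_sum, MvPolynomial.coeff_sum]
    refine Finset.sum_congr rfl fun σ _ => ?_
    rw [Finset.mul_sum, MvPolynomial.coeff_sum]
    refine Finset.sum_congr rfl fun f _ => ?_
    rw [mul_left_comm, MvPolynomial.coeff_C_mul]
    simp only [hc, hR]
    ring
  -- expectation of monomials in the entries
  have master : ∀ e : Fin m × Fin n → ℕ,
      Integrable (fun ω => ∏ p : Fin m × Fin n, (Xm ω p.1 p.2) ^ (e p)) μ ∧
      ∫ ω, ∏ p : Fin m × Fin n, (Xm ω p.1 p.2) ^ (e p) ∂μ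
        = ∏ p : Fin m × Fin n, ∫ ω, (Xm ω p.1 p.2) ^ (e p) ∂μ := by
    intro e
    have hind2 : iIndepFun (m := fun _ : Fin m × Fin n => inferInstance)
        (fun p ω => (Xm ω p.1 p.2) ^ (e p)) μ :=
      hindep.comp (fun p (r : ℝ) => r ^ (e p)) (fun p => measurable_id.pow_const (e p))
    exact aux_prod_indep μ _ hind2 (fun p => (hmeas p).pow_const (e p))
      (fun p => hmom p (e p)) univ
  -- R in exponent form
  have hRe : ∀ (σ : Equiv.Perm (Fin m)) (f : Fin m → Option (Fin n)),
      R σ f = fun ω => ∏ p : Fin m × Fin n, (Xm ω p.1 p.2) ^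
        (((Sf f).filter (fun i => ((σ i : Fin m), (f i).iget) = p)).card +
         ((Sf f).filter (fun i => ((i : Fin m), (f i).iget) = p)).card) := by
    intro σ f
    funext ω
    simp only [hR]
    rw [Finset.prod_mul_distrib]
    have e1 : (∏ i ∈ Sf f, Xm ω (σ i) ((f i).iget))
        = ∏ i ∈ Sf f, (fun p : Fin m × Fin n => Xm ω p.1 p.2) ((σ i, (f i).iget)) := rfl
    have e2 : (∏ i ∈ Sf f, Xm ω i ((f i).iget))
        = ∏ i ∈ Sf f, (fun p : Fin m × Fin n => Xm ω p.1 p.2) ((i, (f i).iget)) := rfl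
    rw [e1, e2, aux_prod_fiber (Sf f) (fun i => ((σ i : Fin m), (f i).iget))
        (fun p : Fin m × Fin n => Xm ω p.1 p.2),
      aux_prod_fiber (Sf f) (fun i => ((i : Fin m), (f i).iget))
        (fun p : Fin m × Fin n => Xm ω p.1 p.2),
      ← Finset.prod_mul_distrib]
    exact Finset.prod_congr rfl fun p _ => (pow_add _ _ _).symm
  have hInt : ∀ σ f, Integrable (R σ f) μ := by
    intro σ f
    rw [hRe]
    exact (master _).1
  -- moments
  have hM1 : ∀ p : Fin m × Fin n, ∫ ω, Xm ω p.1 p.2 ∂μ = 0 :=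
    fun p => aux_mean_zero μ _ (hsymm p)
  have hM2 : ∀ p : Fin m × Fin n, ∫ ω, (Xm ω p.1 p.2) ^ 2 ∂μ = 1 :=
    fun p => aux_sq_one μ _ (hmeas p) (hsymm p) (hvar p) (hmom p 2)
  -- swap integral and double sum
  have step1 : ∫ ω, MvPolynomial.coeff d
      ((MvPolynomial.X 1 : MvPolynomial (Fin 2) ℝ) ^ (n - m) *
        (((MvPolynomial.X 0 * MvPolynomial.X 1 : MvPolynomial (Fin 2) ℝ)) •
            (1 : Matrix (Fin m) (Fin m) (MvPolynomial (Fin 2) ℝ))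
          - (θ • (Matrix.of (Xm ω) * (Matrix.of (Xm ω))ᵀ)).map MvPolynomial.C).det) ∂μ
      = ∑ f ∈ Fintype.piFinset (fun _ : Fin m => (univ : Finset (Option (Fin n)))),
          ∑ σ : Equiv.Perm (Fin m), c σ f * ∫ ω, R σ f ω ∂μ := by
    rw [integral_congr_ae (Filter.Eventually.of_forall hpt)]
    rw [integral_finset_sum _ (fun σ _ => integrable_finset_sum _
      (fun f _ => (hInt σ f).const_mul (c σ f)))]
    rw [Finset.sum_congr rfl fun σ _ => integral_finset_sum _
      (fun f _ => (hInt σ f).const_mul (c σ f))]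
    rw [Finset.sum_comm]
    exact Finset.sum_congr rfl fun f _ => Finset.sum_congr rfl fun σ _ =>
      integral_const_mul _ _
  -- per f evaluation of the sum over permutations
  have hperf : ∀ f ∈ Fintype.piFinset (fun _ : Fin m => (univ : Finset (Option (Fin n)))),
      (∑ σ : Equiv.Perm (Fin m), c σ f * ∫ ω, R σ f ω ∂μ)
      = (if Set.InjOn (fun i => (f i).iget) ↑(Sf f)
          then (-θ) ^ (Sf f).card * MvPolynomial.coeff d
            ((MvPolynomial.X 1 : MvPolynomial (Fin 2) ℝ) ^ (n - m) *
              (MvPolynomial.X 0 * MvPolynomial.X 1 : MvPolynomial (Fin 2) ℝ) ^ (m - (Sf f).card))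
          else 0) := by
    intro f _
    by_cases hinj : Set.InjOn (fun i => (f i).iget) ↑(Sf f)
    · rw [if_pos hinj]
      rw [Finset.sum_eq_single (1 : Equiv.Perm (Fin m)) ?_ (fun h => absurd (mem_univ _) h)]
      · -- value at identity
        have hint1 : ∫ ω, R 1 f ω ∂μ = 1 := by
          rw [hRe, (master _).2]
          refine Finset.prod_eq_one fun p _ => ?_
          have hsub : (Sf f).filter (fun i => ((i : Fin m), (f i).iget) = p) ⊆ {p.1} := by
            intro i hi
            have h1 := congrArg Prod.fst (Finset.mem_filter.mp hi).2
            simp only [Finset.mem_singleton]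
            exact h1
          have hcardle : ((Sf f).filter (fun i => ((i : Fin m), (f i).iget) = p)).card ≤ 1 := by
            simpa using Finset.card_le_card hsub
          have heqf : (Sf f).filter (fun i => (((1 : Equiv.Perm (Fin m)) i : Fin m), (f i).iget) = p)
              = (Sf f).filter (fun i => ((i : Fin m), (f i).iget) = p) := by
            refine Finset.filter_congr fun i _ => ?_
            simp
          rw [heqf]
          set b := ((Sf f).filter (fun i => ((i : Fin m), (f i).iget) = p)).card with hb
          interval_cases b
          · simp
          · have : (1 + 1 : ℕ) = 2 := rfl
            rw [this, hM2 p]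
        rw [hint1, mul_one]
        simp only [hc]
        have hcond : ∀ i ∉ Sf f, (1 : Equiv.Perm (Fin m)) i = i := fun i _ => rfl
        rw [if_pos hcond]
        simp
      · -- other permutations give zero
        intro σ _ hσ1
        by_cases hfix : ∀ i ∉ Sf f, σ i = i
        · -- σ moves a point of Sf f; expectation vanishes
          obtain ⟨i0, hσ0⟩ : ∃ i0, σ i0 ≠ i0 := by
            by_contra h
            push_neg at h
            exact hσ1 (Equiv.ext h)
          have hi0S : i0 ∈ Sf f := by
            by_contra h
            exact hσ0 (hfix i0 h)
          have hRz : ∫ ω, R σ f ω ∂μ = 0 := by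
            rw [hRe, (master _).2]
            refine Finset.prod_eq_zero (Finset.mem_univ (i0, (f i0).iget)) ?_
            have ha : (Sf f).filter
                (fun i => ((σ i : Fin m), (f i).iget) = (i0, (f i0).iget)) = ∅ := by
              refine Finset.filter_eq_empty_iff.mpr fun i hi => ?_
              simp only [Prod.mk.injEq, not_and]
              intro hσi hgi
              have hii : i = i0 := hinj (by simpa using hi) (by simpa using hi0S) hgi
              subst hii
              exact hσ0 hσi
            have hb : (Sf f).filter
                (fun i => ((i : Fin m), (f i).iget) = (i0, (f i0).iget)) = {i0} := by
              apply Finset.eq_singleton_iff_unique_mem.mpr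
              constructor
              · exact Finset.mem_filter.mpr ⟨hi0S, rfl⟩
              · intro i hi
                exact congrArg Prod.fst (Finset.mem_filter.mp hi).2
            rw [ha, hb]
            simp only [Finset.card_empty, Finset.card_singleton, zero_add, pow_one]
            exact hM1 (i0, (f i0).iget)
          rw [hRz, mul_zero]
        · -- σ moves a point outside Sf f; coefficient vanishes
          simp only [hc, if_neg hfix, mul_zero, MvPolynomial.coeff_zero, zero_mul]
    · rw [if_neg hinj]
      obtain ⟨i0, hi0, i1, hi1, hgeq, hne01⟩ :
          ∃ i0 ∈ Sf f, ∃ i1 ∈ Sf f, (f i0).iget = (f i1).iget ∧ i0 ≠ i1 := by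
        by_contra h
        push_neg at h
        exact hinj fun a ha b hb hab =>
          h a (Finset.mem_coe.mp ha) b (Finset.mem_coe.mp hb) hab
      set τ := Equiv.swap i0 i1 with hτ
      have hτfix : ∀ i, i ≠ i0 → i ≠ i1 → τ i = i :=
        fun i h0 h1 => Equiv.swap_apply_of_ne_of_ne h0 h1
      have hjτ : ∀ i, (f (τ i)).iget = (f i).iget := by
        intro i
        rcases eq_or_ne i i0 with rfl | h0
        · rw [hτ, Equiv.swap_apply_left]; exact hgeq.symm
        rcases eq_or_ne i i1 with rfl | h1
        · rw [hτ, Equiv.swap_apply_right]; exact hgeq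
        · rw [hτfix i h0 h1]
      refine Finset.sum_involution (fun σ _ => σ * τ) ?_ ?_ (fun σ _ => Finset.mem_univ _) ?_
      · intro σ _
        have hRτ : R (σ * τ) f = R σ f := by
          funext ω
          simp only [hR]
          rw [Finset.prod_mul_distrib, Finset.prod_mul_distrib]
          congr 1
          have hstep : ∀ i ∈ Sf f, Xm ω ((σ * τ) i) ((f i).iget)
              = (fun i => Xm ω (σ i) ((f i).iget)) (τ i) := by
            intro i _
            simp only [Equiv.Perm.mul_apply]
            rw [hjτ i]
          rw [Finset.prod_congr rfl hstep]
          refine Equiv.Perm.prod_comp τ (Sf f) (fun i => Xm ω (σ i) ((f i).iget)) ?_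
          intro a ha
          simp only [Set.mem_setOf_eq] at ha
          have haa : a = i0 ∨ a = i1 := by
            by_contra hcon
            push_neg at hcon
            exact ha (hτfix a hcon.1 hcon.2)
          rcases haa with rfl | rfl
          · exact Finset.mem_coe.mpr hi0
          · exact Finset.mem_coe.mpr hi1
        have hcτ : c (σ * τ) f = - c σ f := by
          simp only [hc]
          have hsign : ((Equiv.Perm.sign (σ * τ) : ℤ) : ℝ)
              = -((Equiv.Perm.sign σ : ℤ) : ℝ) := by
            rw [_root_.map_mul, hτ, Equiv.Perm.sign_swap hne01]
            push_cast
            ring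
          have hτi : ∀ i ∉ Sf f, τ i = i := by
            intro i hi
            refine hτfix i (fun h0 => hi ?_) (fun h1 => hi ?_)
            · rw [h0]; exact hi0
            · rw [h1]; exact hi1
          have hcond : (∀ i ∉ Sf f, (σ * τ) i = i) ↔ (∀ i ∉ Sf f, σ i = i) := by
            constructor <;> intro h i hi
            · have := h i hi
              rwa [Equiv.Perm.mul_apply, hτi i hi] at this
            · rw [Equiv.Perm.mul_apply, hτi i hi]
              exact h i hi
          rw [hsign, if_congr hcond rfl rfl]
          ring
        rw [hRτ, hcτ]
        ring
      · intro σ _ _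
        rw [Ne, Equiv.mul_swap_eq_iff]
        exact hne01
      · intro σ _
        simp only [mul_assoc, hτ, Equiv.swap_mul_self, mul_one]
  -- assemble
  rw [step1, Finset.sum_congr rfl hperf,
    aux_count m n (fun S => (-θ) ^ S.card * MvPolynomial.coeff d
      ((MvPolynomial.X 1 : MvPolynomial (Fin 2) ℝ) ^ (n - m) *
        (MvPolynomial.X 0 * MvPolynomial.X 1 : MvPolynomial (Fin 2) ℝ) ^ (m - S.card)))]
  -- right-hand side
  rw [MvPolynomial.coeff_sum]
  have hRHS : ∀ i ∈ Finset.range (m + 1),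
      MvPolynomial.coeff d (((-θ) ^ i / (i.factorial : ℝ)) •
        (fun r => MvPolynomial.pderiv 0 r)^[i]
          ((fun r => MvPolynomial.pderiv 1 r)^[i]
            ((MvPolynomial.X 0 : MvPolynomial (Fin 2) ℝ) ^ m * (MvPolynomial.X 1) ^ n)))
      = ((-θ) ^ i / (i.factorial : ℝ)) * ((m.descFactorial i : ℝ) * (n.descFactorial i : ℝ) *
          MvPolynomial.coeff d ((MvPolynomial.X 0 : MvPolynomial (Fin 2) ℝ) ^ (m - i) *
            (MvPolynomial.X 1) ^ (n - i))) := by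
    intro i _
    rw [aux_pd1 m n i, aux_pd0 m (n - i) i ((n.descFactorial i : ℝ)),
      MvPolynomial.coeff_smul, MvPolynomial.coeff_C_mul]
    simp only [smul_eq_mul]
    try ring
  rw [Finset.sum_congr rfl hRHS]
  -- group subsets by cardinality
  rw [← Finset.sum_fiberwise_of_maps_to (g := fun S : Finset (Fin m) => S.card)
    (t := Finset.range (m + 1))
    (fun S _ => Finset.mem_range.mpr (Nat.lt_succ_of_le (by
      simpa using Finset.card_le_univ S)))]
  refine Finset.sum_congr rfl fun k hk => ?_
  have hkm : k ≤ m := Nat.lt_succ_iff.mp (Finset.mem_range.mp hk)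
  have hconst : ∀ S ∈ (univ : Finset (Finset (Fin m))).filter (fun S => S.card = k),
      (n.descFactorial S.card : ℝ) * ((-θ) ^ S.card * MvPolynomial.coeff d
        ((MvPolynomial.X 1 : MvPolynomial (Fin 2) ℝ) ^ (n - m) *
          (MvPolynomial.X 0 * MvPolynomial.X 1 : MvPolynomial (Fin 2) ℝ) ^ (m - S.card)))
      = (n.descFactorial k : ℝ) * ((-θ) ^ k * MvPolynomial.coeff d
        ((MvPolynomial.X 1 : MvPolynomial (Fin 2) ℝ) ^ (n - m) *
          (MvPolynomial.X 0 * MvPolynomial.X 1 : MvPolynomial (Fin 2) ℝ) ^ (m - k))) := by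
    intro S hS
    rw [(Finset.mem_filter.mp hS).2]
  rw [Finset.sum_congr rfl hconst, Finset.sum_const]
  have hfc : ((univ : Finset (Finset (Fin m))).filter (fun S => S.card = k)).card
      = m.choose k := by
    have : (univ : Finset (Finset (Fin m))).filter (fun S => S.card = k)
        = Finset.powersetCard k (univ : Finset (Fin m)) := by
      rw [Finset.powersetCard_eq_filter, Finset.powerset_univ]
    rw [this, Finset.card_powersetCard, Finset.card_univ, Fintype.card_fin]
  rw [hfc]
  -- the monomials agree
  have hexp : n - m + (m - k) = n - k := by omega
  have hP : (MvPolynomial.X 1 : MvPolynomial (Fin 2) ℝ) ^ (n - m) *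
      (MvPolynomial.X 0 * MvPolynomial.X 1 : MvPolynomial (Fin 2) ℝ) ^ (m - k)
      = (MvPolynomial.X 0 : MvPolynomial (Fin 2) ℝ) ^ (m - k) * (MvPolynomial.X 1) ^ (n - k) := by
    rw [mul_pow, mul_comm ((MvPolynomial.X 0 : MvPolynomial (Fin 2) ℝ) ^ (m - k)) _,
      ← mul_assoc, ← pow_add, hexp]
    ring
  rw [hP, nsmul_eq_mul]
  have hdf : (m.descFactorial k : ℝ) = (k.factorial : ℝ) * (m.choose k : ℝ) := by
    rw [← Nat.cast_mul, ← Nat.descFactorial_eq_factorial_mul_choose]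
  rw [hdf]
  have hfacne : (k.factorial : ℝ) ≠ 0 := Nat.cast_ne_zero.mpr (Nat.factorial_ne_zero k)
  field_simp

end
end

section
/- Fix integers s ≥ 0, i ≥ 0, and 0 ≤ j ≤ s, and θ ∈ ℝ. Let U_y^s denote the linear map on real polynomials in x and y of y-degree at most s defined on monomials by U_y^s[x^a y^b] = x^a y^{s−b}. Then U_y^s ∘ (Σ_{k≥0} (θ^k/k!) ∂_x^k ∂_y^k) ∘ U_y^s applied to x^i y^j equals (1 + θ·y·∂_x)^{s−j}[x^i y^j] = Σ_{k=0}^{min(s−j, i)} binom(s−j, k) · θ^k · (i!/(i−k)!) · x^{i−k} y^{j+k}. -/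
open MvPolynomial

noncomputable section

/-- `U_y^s`: sends each monomial `x^a y^b` (with `b ≤ s`) to `x^a y^(s−b)`,
i.e. `p(x,y) ↦ y^s p(x, 1/y)`.  Here `x = X 0`, `y = X 1`. -/
def Uop (s : ℕ) (p : MvPolynomial (Fin 2) ℝ) : MvPolynomial (Fin 2) ℝ :=
  ∑ m ∈ p.support,
    monomial (Finsupp.single 0 (m 0) + Finsupp.single 1 (s - m 1)) (coeff m p)

lemma Uop_eq (s : ℕ) (p : MvPolynomial (Fin 2) ℝ) :
    Uop s p = Finsupp.sum (AddMonoidAlgebra.coeff p)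
      (fun m c => monomial (Finsupp.single 0 (m 0) + Finsupp.single 1 (s - m 1)) c) := rfl

lemma Uop_add (s : ℕ) (p q : MvPolynomial (Fin 2) ℝ) :
    Uop s (p + q) = Uop s p + Uop s q := by
  rw [Uop_eq, Uop_eq, Uop_eq, AddMonoidAlgebra.coeff_add]
  exact Finsupp.sum_add_index' (by simp) (fun _ _ _ => map_add _ _ _)

lemma Uop_smul (s : ℕ) (c : ℝ) (p : MvPolynomial (Fin 2) ℝ) :
    Uop s (c • p) = c • Uop s p := by
  rw [Uop_eq, Uop_eq, AddMonoidAlgebra.coeff_smul, Finsupp.sum_smul_index' (by simp),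
    Finsupp.smul_sum]
  simp only [map_smul]

lemma Uop_sum {α : Type*} (s : ℕ) (t : Finset α) (f : α → MvPolynomial (Fin 2) ℝ) :
    Uop s (∑ a ∈ t, f a) = ∑ a ∈ t, Uop s (f a) := by
  classical
  induction t using Finset.induction with
  | empty => simp [Uop_eq]
  | insert _ _ h ih => simp [Finset.sum_insert h, Uop_add, ih]

lemma Uop_monomial (s : ℕ) (d : Fin 2 →₀ ℕ) (c : ℝ) :
    Uop s (monomial d c) =
      monomial (Finsupp.single 0 (d 0) + Finsupp.single 1 (s - d 1)) c := by
  rw [Uop_eq]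
  have : AddMonoidAlgebra.coeff (monomial d c : MvPolynomial (Fin 2) ℝ) = Finsupp.single d c := rfl
  rw [this, Finsupp.sum_single_index (by simp)]

lemma xy_pow (a b : ℕ) : (X 0 : MvPolynomial (Fin 2) ℝ) ^ a * X 1 ^ b =
    monomial (Finsupp.single 0 a + Finsupp.single 1 b) 1 := by
  rw [X_pow_eq_monomial, X_pow_eq_monomial, monomial_mul, one_mul]

lemma exp_sub0 (a b : ℕ) :
    (Finsupp.single (0:Fin 2) a + Finsupp.single 1 b) - Finsupp.single 0 1
      = Finsupp.single 0 (a - 1) + Finsupp.single 1 b := by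
  ext t
  fin_cases t <;> simp [Finsupp.single_apply]

lemma exp_sub1 (a b : ℕ) :
    (Finsupp.single (0:Fin 2) a + Finsupp.single 1 b) - Finsupp.single 1 1
      = Finsupp.single 0 a + Finsupp.single 1 (b - 1) := by
  ext t
  fin_cases t <;> simp [Finsupp.single_apply]

lemma exp_app0 (a b : ℕ) :
    ((Finsupp.single (0:Fin 2) a + Finsupp.single 1 b : Fin 2 →₀ ℕ)) 0 = a := by
  simp [Finsupp.single_apply]

lemma exp_app1 (a b : ℕ) :
    ((Finsupp.single (0:Fin 2) a + Finsupp.single 1 b : Fin 2 →₀ ℕ)) 1 = b := by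
  simp [Finsupp.single_apply]

lemma pderiv1_iter (l a b : ℕ) (c : ℝ) :
    (fun r => pderiv (1 : Fin 2) r)^[l]
      (monomial (Finsupp.single 0 a + Finsupp.single 1 b) c)
    = monomial (Finsupp.single 0 a + Finsupp.single 1 (b - l))
        (c * (b.descFactorial l : ℝ)) := by
  induction l with
  | zero => simp
  | succ l ih =>
    rw [Function.iterate_succ_apply', ih, pderiv_monomial, exp_sub1, exp_app1,
      show b - l - 1 = b - (l + 1) from by omega, Nat.descFactorial_succ]
    congr 1
    push_cast
    ring

lemma pderiv0_iter (l a b : ℕ) (c : ℝ) :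
    (fun r => pderiv (0 : Fin 2) r)^[l]
      (monomial (Finsupp.single 0 a + Finsupp.single 1 b) c)
    = monomial (Finsupp.single 0 (a - l) + Finsupp.single 1 b)
        (c * (a.descFactorial l : ℝ)) := by
  induction l with
  | zero => simp
  | succ l ih =>
    rw [Function.iterate_succ_apply', ih, pderiv_monomial, exp_sub0, exp_app0,
      show a - l - 1 = a - (l + 1) from by omega, Nat.descFactorial_succ]
    congr 1
    push_cast
    ring

lemma y_mul (a b : ℕ) (c : ℝ) :
    (X 1 : MvPolynomial (Fin 2) ℝ) * monomial (Finsupp.single 0 a + Finsupp.single 1 b) c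
      = monomial (Finsupp.single 0 a + Finsupp.single 1 (b + 1)) c := by
  have h : (Finsupp.single (1:Fin 2) 1) + (Finsupp.single 0 a + Finsupp.single 1 b)
      = Finsupp.single 0 a + Finsupp.single 1 (b + 1) := by
    ext t
    fin_cases t <;> simp [Finsupp.single_apply] <;> omega
  rw [← pow_one (X 1 : MvPolynomial (Fin 2) ℝ), X_pow_eq_monomial, monomial_mul, one_mul, h]

lemma step_term (θ c : ℝ) (a b : ℕ) :
    θ • ((X 1 : MvPolynomial (Fin 2) ℝ) * pderiv 0 (c • (X 0 ^ a * X 1 ^ b)))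
      = (θ * c * (a : ℝ)) • (X 0 ^ (a - 1) * X 1 ^ (b + 1)) := by
  rw [xy_pow a b, xy_pow (a-1) (b+1), smul_monomial, smul_eq_mul, mul_one, pderiv_monomial,
    exp_sub0, exp_app0, y_mul, smul_monomial, smul_monomial]
  congr 1
  simp [smul_eq_mul]
  ring

/-- the generic term in the expansion of `(1 + θ y ∂ₓ)^m [x^i y^j]`. -/
def trm (θ : ℝ) (i j m l : ℕ) : MvPolynomial (Fin 2) ℝ :=
  ((m.choose l : ℝ) * θ ^ l * (i.descFactorial l : ℝ)) •
    ((X 0 : MvPolynomial (Fin 2) ℝ) ^ (i - l) * X 1 ^ (j + l))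

lemma iter_formula (θ : ℝ) (i j : ℕ) (n : ℕ) :
    (fun p => p + θ • ((X 1 : MvPolynomial (Fin 2) ℝ) * pderiv 0 p))^[n]
        ((X 0 : MvPolynomial (Fin 2) ℝ) ^ i * X 1 ^ j)
      = ∑ l ∈ Finset.range (n + 1), trm θ i j n l := by
  induction n with
  | zero => simp [trm]
  | succ n ih =>
    rw [Function.iterate_succ_apply', ih]
    have key : ∀ l, θ • ((X 1 : MvPolynomial (Fin 2) ℝ) * pderiv 0 (trm θ i j n l))
        = ((n.choose l : ℝ) * θ ^ (l+1) * (i.descFactorial (l+1) : ℝ)) •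
          ((X 0 : MvPolynomial (Fin 2) ℝ) ^ (i - (l+1)) * X 1 ^ (j + (l+1))) := by
      intro l
      rw [trm, step_term, show i - l - 1 = i - (l+1) from by omega,
        show j + l + 1 = j + (l+1) from rfl, Nat.descFactorial_succ]
      congr 1
      push_cast
      ring
    have h1 : θ • ((X 1 : MvPolynomial (Fin 2) ℝ) *
          pderiv 0 (∑ l ∈ Finset.range (n+1), trm θ i j n l))
        = ∑ l ∈ Finset.range (n+1),
            ((n.choose l : ℝ) * θ ^ (l+1) * (i.descFactorial (l+1) : ℝ)) •
              ((X 0 : MvPolynomial (Fin 2) ℝ) ^ (i - (l+1)) * X 1 ^ (j + (l+1))) := by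
      rw [map_sum, Finset.mul_sum, Finset.smul_sum]
      exact Finset.sum_congr rfl fun l _ => key l
    rw [h1, Finset.sum_range_succ' _ (n+1)]
    have h2 : ∀ l, trm θ i j (n+1) (l+1)
        = ((n.choose l : ℝ) * θ ^ (l+1) * (i.descFactorial (l+1) : ℝ)) •
            ((X 0 : MvPolynomial (Fin 2) ℝ) ^ (i - (l+1)) * X 1 ^ (j + (l+1)))
          + trm θ i j n (l+1) := by
      intro l
      rw [trm, trm, Nat.choose_succ_succ]
      push_cast
      rw [add_mul, add_mul, add_smul]
    simp only [h2, Finset.sum_add_distrib]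
    have h3 : ∑ l ∈ Finset.range (n+1), trm θ i j n (l+1) + trm θ i j (n+1) 0
        = ∑ l ∈ Finset.range (n+1), trm θ i j n l := by
      have e0 : trm θ i j (n+1) 0 = trm θ i j n 0 := by simp [trm]
      have e1 : trm θ i j n (n+1) = 0 := by
        simp [trm, Nat.choose_succ_self]
      rw [e0, ← Finset.sum_range_succ' (trm θ i j n) (n+1), Finset.sum_range_succ, e1, add_zero]
    rw [add_assoc, h3]
    exact add_comm _ _

lemma term_eval (s i j : ℕ) (hj : j ≤ s) (θ : ℝ) (l : ℕ) :
    Uop s ((θ ^ l / (l.factorial : ℝ)) •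
        (fun r => pderiv (0:Fin 2) r)^[l] ((fun r => pderiv (1:Fin 2) r)^[l]
          (monomial (Finsupp.single 0 i + Finsupp.single 1 (s - j)) (1:ℝ))))
      = trm θ i j (s - j) l := by
  rw [pderiv1_iter, pderiv0_iter, Uop_smul, Uop_monomial, exp_app0, exp_app1]
  rcases le_or_gt l (s - j) with h | h
  · rw [show s - (s - j - l) = j + l from by omega, trm, xy_pow, smul_monomial, smul_monomial]
    congr 1
    rw [Nat.descFactorial_eq_factorial_mul_choose (s - j) l]
    have hl : (l.factorial : ℝ) ≠ 0 := Nat.cast_ne_zero.2 (Nat.factorial_ne_zero l)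
    push_cast
    field_simp
    have := mul_inv_cancel₀ hl
    linear_combination (((s - j).choose l : ℝ) * (i.descFactorial l : ℝ) * θ ^ l) * this
  · have h1 : (s - j).descFactorial l = 0 := Nat.descFactorial_eq_zero_iff_lt.2 h
    have h2 : (s - j).choose l = 0 := Nat.choose_eq_zero_of_lt h
    simp [h1, h2, trm]

lemma trm_sum_eq (θ : ℝ) (i j m : ℕ) :
    ∑ l ∈ Finset.range (m + 1), trm θ i j m l
      = ∑ l ∈ Finset.range (min m i + 1),
          ((m.choose l : ℝ) * θ ^ l * ((i.factorial : ℝ) / ((i - l).factorial : ℝ))) •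
            ((X 0 : MvPolynomial (Fin 2) ℝ) ^ (i - l) * X 1 ^ (j + l)) := by
  have hsub : Finset.range (min m i + 1) ⊆ Finset.range (m + 1) :=
    Finset.range_subset_range.2 (by omega)
  rw [← Finset.sum_subset hsub (fun l hl hnl => ?_)]
  · refine Finset.sum_congr rfl fun l hl => ?_
    have hli : l ≤ i := by
      have := Finset.mem_range.1 hl; omega
    rw [trm]
    congr 1
    have hfac : ((i - l).factorial : ℝ) ≠ 0 := Nat.cast_ne_zero.2 (Nat.factorial_ne_zero _)
    have : ((i.factorial : ℝ) / ((i - l).factorial : ℝ)) = (i.descFactorial l : ℝ) := by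
      rw [div_eq_iff hfac]
      exact_mod_cast ((Nat.factorial_mul_descFactorial hli).symm.trans (Nat.mul_comm _ _))
    rw [this]
  · have hl' : i < l := by
      have h1 := Finset.mem_range.1 hl
      have h2 : ¬ l < min m i + 1 := fun hc => hnl (Finset.mem_range.2 hc)
      omega
    simp [trm, Nat.descFactorial_eq_zero_iff_lt.2 hl']

theorem stmt12 (s i j : ℕ) (hj : j ≤ s) (θ : ℝ) :
    -- `U_y^s ∘ e^{θ ∂_x ∂_y} ∘ U_y^s [x^i y^j] = (1 + θ y ∂_x)^(s−j) [x^i y^j]` ...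
    Uop s (∑ l ∈ Finset.range (i + s + 1), (θ ^ l / (l.factorial : ℝ)) •
        (fun r => pderiv 0 r)^[l] ((fun r => pderiv 1 r)^[l]
          (Uop s ((X 0 : MvPolynomial (Fin 2) ℝ) ^ i * (X 1) ^ j))))
      = (fun p => p + θ • ((X 1 : MvPolynomial (Fin 2) ℝ) * pderiv 0 p))^[s - j]
          ((X 0 : MvPolynomial (Fin 2) ℝ) ^ i * (X 1) ^ j)
    ∧ -- ... which equals the explicit sum:
    (fun p => p + θ • ((X 1 : MvPolynomial (Fin 2) ℝ) * pderiv 0 p))^[s - j]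
        ((X 0 : MvPolynomial (Fin 2) ℝ) ^ i * (X 1) ^ j)
      = ∑ l ∈ Finset.range (min (s - j) i + 1),
          (((s - j).choose l : ℝ) * θ ^ l * ((i.factorial : ℝ) / ((i - l).factorial : ℝ))) •
            ((X 0 : MvPolynomial (Fin 2) ℝ) ^ (i - l) * (X 1) ^ (j + l)) := by
  have e1 : Uop s ((X 0 : MvPolynomial (Fin 2) ℝ) ^ i * X 1 ^ j)
      = monomial (Finsupp.single 0 i + Finsupp.single 1 (s - j)) (1:ℝ) := by
    rw [xy_pow, Uop_monomial, exp_app0, exp_app1]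
  constructor
  · rw [e1, Uop_sum, iter_formula,
      Finset.sum_congr rfl (fun l _ => term_eval s i j hj θ l)]
    have hsub : Finset.range (s - j + 1) ⊆ Finset.range (i + s + 1) :=
      Finset.range_subset_range.2 (by omega)
    refine (Finset.sum_subset hsub fun l hl hnl => ?_).symm
    have hl' : s - j < l := by
      have h2 : ¬ l < s - j + 1 := fun hc => hnl (Finset.mem_range.2 hc)
      omega
    simp [trm, Nat.choose_eq_zero_of_lt hl']
  · rw [iter_formula]
    exact trm_sum_eq θ i j (s - j)

end
end
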